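/- arXiv:2211.11247 — 4 statements merged into one kernel-verified Lean document; each statement's English description precedes it below -/
import Mathlib

section
/- Let P_1, …, P_N be positive definite real n×n matrices. Then for any vectors x_1, …, x_N ∈ ℝⁿ, (∑_{i=1}^N P_i x_i)ᵀ (∑_{j=1}^N P_j)^{-1} (∑_{i=1}^N P_i x_i) ≤ ∑_{i=1}^N x_iᵀ P_i x_i. Equivalently, the nN×nN block matrix whose (i,j) block is P_i (∑_{h=1}^N P_h)^{-1} P_j is dominated, in the Loewner order, by the block-diagonal matrix diag(P_1, …, P_N). -/
/-!
Put `S = ∑ Pᵢ`, `v = ∑ Pᵢ xᵢ` and `w = S⁻¹ v`. Completing the square,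
`0 ≤ ∑ (xᵢ - w)ᵀ Pᵢ (xᵢ - w) = ∑ xᵢᵀ Pᵢ xᵢ - vᵀ S⁻¹ v`.
The quadratic form of the block matrix at `y` is `∑ yᵢᵀ Pᵢ yᵢ - vᵀ S⁻¹ v` with `v = ∑ Pᵢ yᵢ`,
so the block statement is the same inequality.
-/

open Matrix

lemma Matrix.IsSymm.dotProduct_mulVec_eq {m α : Type*} [Fintype m] [CommSemiring α]
    {A : Matrix m m α} (hA : A.IsSymm) (v w : m → α) : v ⬝ᵥ A *ᵥ w = A *ᵥ v ⬝ᵥ w := by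
  rw [dotProduct_mulVec, ← vecMul_transpose, hA.eq]

lemma Matrix.dotProduct_mulVec_comp {ι m α : Type*} [Fintype ι] [Fintype m]
    [CommSemiring α] (B : Matrix ι ι (Matrix m m α)) (y : ι × m → α) :
    y ⬝ᵥ comp ι ι m m α B *ᵥ y =
      ∑ i, ∑ j, Function.curry y i ⬝ᵥ B i j *ᵥ Function.curry y j := by
  simp only [dotProduct, mulVec, comp_apply, Fintype.sum_prod_type, Finset.mul_sum,
    Function.curry_apply]
  rw [Finset.sum_congr rfl fun i _ => Finset.sum_comm]

section

variable {ι m R : Type*} [Fintype ι] [Fintype m]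

lemma sum_dotProduct_mulVec_sub_sub [CommRing R] {P : ι → Matrix m m R} (hP : ∀ i, (P i).IsSymm)
    (x : ι → m → R) (w : m → R) :
    ∑ i, (x i - w) ⬝ᵥ P i *ᵥ (x i - w) =
      ∑ i, x i ⬝ᵥ P i *ᵥ x i - 2 * ((∑ i, P i *ᵥ x i) ⬝ᵥ w) + w ⬝ᵥ (∑ i, P i) *ᵥ w := by
  have expand (i : ι) : (x i - w) ⬝ᵥ P i *ᵥ (x i - w) =
      x i ⬝ᵥ P i *ᵥ x i - 2 * (P i *ᵥ x i ⬝ᵥ w) + w ⬝ᵥ P i *ᵥ w := by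
    rw [mulVec_sub, dotProduct_sub, sub_dotProduct, sub_dotProduct,
      (hP i).dotProduct_mulVec_eq (x i) w, dotProduct_comm w (P i *ᵥ x i)]
    ring
  simp only [expand, Finset.sum_add_distrib, Finset.sum_sub_distrib, ← Finset.mul_sum,
    sum_dotProduct, sum_mulVec, dotProduct_sum]

variable [Field R] [LinearOrder R] [IsStrictOrderedRing R] [StarRing R] [TrivialStar R]
  [DecidableEq m] {P : ι → Matrix m m R}

theorem sum_mulVec_dotProduct_inv_mulVec_le (hP : ∀ i, (P i).PosSemidef) (x : ι → m → R) :
    (∑ i, P i *ᵥ x i) ⬝ᵥ (∑ i, P i)⁻¹ *ᵥ (∑ i, P i *ᵥ x i) ≤ ∑ i, x i ⬝ᵥ P i *ᵥ x i := by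
  have quad_nonneg (i : ι) (z : m → R) : 0 ≤ z ⬝ᵥ P i *ᵥ z := by
    simpa using (hP i).dotProduct_mulVec_nonneg z
  set S := ∑ i, P i
  set v := ∑ i, P i *ᵥ x i with hv
  by_cases hS : IsUnit S.det
  · have hSw : S *ᵥ (S⁻¹ *ᵥ v) = v := by rw [mulVec_mulVec, mul_nonsing_inv S hS, one_mulVec]
    have expand := sum_dotProduct_mulVec_sub_sub
      (fun i => isHermitian_iff_isSymm.mp (hP i).isHermitian) x (S⁻¹ *ᵥ v)
    rw [← hv, hSw, dotProduct_comm _ v] at expand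
    linarith [Finset.sum_nonneg (s := .univ) fun i _ => quad_nonneg i (x i - S⁻¹ *ᵥ v)]
  · -- Mathlib's `S⁻¹` is `0` when `S` is singular.
    rw [nonsing_inv_apply_not_isUnit S hS, zero_mulVec, dotProduct_zero]
    exact Finset.sum_nonneg fun i _ => quad_nonneg i (x i)

theorem posSemidef_blockDiagonal_sub_mul_inv_mul [DecidableEq ι] (hP : ∀ i, (P i).PosSemidef) :
    (of fun p q : ι × m => (if p.1 = q.1 then P p.1 p.2 q.2 else 0)
      - (P p.1 * (∑ h, P h)⁻¹ * P q.1) p.2 q.2).PosSemidef := by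
  have hsymm (i : ι) : (P i).IsSymm := isHermitian_iff_isSymm.mp (hP i).isHermitian
  set S := ∑ h, P h
  have hSinv : S⁻¹.IsSymm :=
    isHermitian_iff_isSymm.mp (posSemidef_sum .univ fun i _ => hP i).inv.isHermitian
  set B : Matrix ι ι (Matrix m m R) := of fun i j => (if i = j then P i else 0) - P i * S⁻¹ * P j
  have hcomp : (of fun p q : ι × m => (if p.1 = q.1 then P p.1 p.2 q.2 else 0)
      - (P p.1 * S⁻¹ * P q.1) p.2 q.2) = comp ι ι m m R B := by
    ext p q
    simp only [comp_apply, B, of_apply, Matrix.sub_apply]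
    split_ifs <;> rfl
  rw [hcomp]
  refine posSemidef_iff_dotProduct_mulVec.mpr ⟨?_, fun y => ?_⟩
  · refine isHermitian_iff_isSymm.mpr (isSymm_comp_iff_forall.mpr fun i j k l => ?_)
    have hprod : (P j * S⁻¹ * P i)ᵀ = P i * S⁻¹ * P j := by
      rw [transpose_mul, transpose_mul, (hsymm i).eq, hSinv.eq, (hsymm j).eq, Matrix.mul_assoc]
    simp only [B, of_apply, Matrix.sub_apply, ← hprod, transpose_apply]
    rcases eq_or_ne i j with rfl | hij
    · simp only [if_true, (hsymm i).apply]
    · simp only [if_neg hij, if_neg hij.symm, Matrix.zero_apply]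
  · have diag_part (i : ι) (z : ι → m → R) :
        ∑ j, z i ⬝ᵥ (if i = j then P i else 0) *ᵥ z j = z i ⬝ᵥ P i *ᵥ z i := by
      rw [Finset.sum_eq_single_of_mem i (Finset.mem_univ i) fun j _ hji => by
        rw [if_neg hji.symm, zero_mulVec, dotProduct_zero], if_pos rfl]
    have off_part (i j : ι) (z : ι → m → R) :
        z i ⬝ᵥ (P i * S⁻¹ * P j) *ᵥ z j = P i *ᵥ z i ⬝ᵥ S⁻¹ *ᵥ (P j *ᵥ z j) := by
      rw [← mulVec_mulVec, ← mulVec_mulVec, (hsymm i).dotProduct_mulVec_eq]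
    rw [star_trivial, dotProduct_mulVec_comp]
    simp only [B, of_apply, sub_mulVec, dotProduct_sub, Finset.sum_sub_distrib, diag_part,
      off_part, ← dotProduct_sum, ← mulVec_sum, ← sum_dotProduct]
    rw [sub_nonneg]
    exact sum_mulVec_dotProduct_inv_mulVec_le hP _

end

theorem posdef_harmonic_block_inequality_general
    (n N : ℕ)
    (P : Fin N → Matrix (Fin n) (Fin n) ℝ) (hP : ∀ i, (P i).PosDef) :
    (∀ x : Fin N → (Fin n → ℝ),
      (∑ i, (P i).mulVec (x i)) ⬝ᵥ ((∑ j, P j)⁻¹).mulVec (∑ i, (P i).mulVec (x i)) ≤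
        ∑ i, x i ⬝ᵥ (P i).mulVec (x i)) ∧
    ((Matrix.of (fun p q : Fin N × Fin n =>
        (if p.1 = q.1 then P p.1 p.2 q.2 else 0)
          - (P p.1 * (∑ h, P h)⁻¹ * P q.1) p.2 q.2)).PosSemidef) :=
  ⟨sum_mulVec_dotProduct_inv_mulVec_le fun i => (hP i).posSemidef,
    posSemidef_blockDiagonal_sub_mul_inv_mul fun i => (hP i).posSemidef⟩

/-- For positive definite matrices `P₁, …, P_N` and vectors
`x₁, …, x_N ∈ ℝⁿ`,
`(∑ᵢ Pᵢ xᵢ)ᵀ (∑ⱼ Pⱼ)⁻¹ (∑ᵢ Pᵢ xᵢ) ≤ ∑ᵢ xᵢᵀ Pᵢ xᵢ`;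
equivalently, the `nN×nN` block matrix with `(i,j)` block `Pᵢ (∑ₕ Pₕ)⁻¹ Pⱼ` is dominated
in the Loewner order by `diag(P₁, …, P_N)`. -/
theorem posdef_harmonic_block_inequality
    (n N : ℕ) (hn : 0 < n) (hN : 0 < N)
    (P : Fin N → Matrix (Fin n) (Fin n) ℝ) (hP : ∀ i, (P i).PosDef) :
    (∀ x : Fin N → (Fin n → ℝ),
      (∑ i, (P i).mulVec (x i)) ⬝ᵥ ((∑ j, P j)⁻¹).mulVec (∑ i, (P i).mulVec (x i)) ≤
        ∑ i, x i ⬝ᵥ (P i).mulVec (x i)) ∧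
    ((Matrix.of (fun p q : Fin N × Fin n =>
        (if p.1 = q.1 then P p.1 p.2 q.2 else 0)
          - (P p.1 * (∑ h, P h)⁻¹ * P q.1) p.2 q.2)).PosSemidef) :=
  posdef_harmonic_block_inequality_general n N P hP
end

section
/- Let {P_i}_{i=1}^N be the unique group of positive definite solutions to the HCREs, define P̄_i = (∑_{j=1}^N l_{ij} (P_j^{-1} + C_jᵀ R_j^{-1} C_j))^{-1}, let 𝒜 be the nN×nN block matrix whose (i,j) block is l_{ij} A P̄_i P_j^{-1}, let q ∈ ℝ^N be a vector with strictly positive entries satisfying qᵀ L = qᵀ, and let 𝒬 be the block-diagonal nN×nN matrix with diagonal blocks q_1 P_1^{-1}, …, q_N P_N^{-1}. Then there exists β ∈ (0, 1) such that 𝒜ᵀ 𝒬 𝒜 ≤ β 𝒬 in the Loewner order. -/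
/-!
Write `x = (x_j)` blockwise and `z_i = ∑_j l_ij P_j⁻¹ x_j`, so that the `i`-th block of `𝒜 x` is
`A P̄_i z_i`. Two estimates hold at every node. Since `A P̄_i Aᵀ = P_i - Q ≤ (1 - ε) P_i` for small
`ε > 0`, a Schur complement argument gives `(A P̄_i)ᵀ P_i⁻¹ (A P̄_i) ≤ (1 - ε) P̄_i`. Since
`P̄_i⁻¹ ≥ ∑_j l_ij P_j⁻¹`, a Jensen-type inequality gives `z_iᵀ P̄_i z_i ≤ ∑_j l_ij x_jᵀ P_j⁻¹ x_j`.
Weighting node `i` by `q_i` and using `qᵀ L = qᵀ`, the two combine to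
`xᵀ 𝒜ᵀ 𝒬 𝒜 x ≤ (1 - ε) xᵀ 𝒬 x`.
-/

open Matrix Filter Topology
open scoped MatrixOrder

namespace Matrix

variable {k : Type*} [Fintype k]

lemma IsHermitian.dotProduct_mulVec_comm {H : Matrix k k ℝ} (hH : H.IsHermitian) (x y : k → ℝ) :
    x ⬝ᵥ H *ᵥ y = y ⬝ᵥ H *ᵥ x := by
  rw [← dotProduct_transpose_mulVec, ← conjTranspose_eq_transpose_of_trivial, hH.eq]

lemma dotProduct_transpose_mul_mul_mulVec {m : Type*} [Fintype m] (B : Matrix m k ℝ)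
    (M : Matrix m m ℝ) (x : k → ℝ) :
    x ⬝ᵥ (Bᵀ * M * B) *ᵥ x = (B *ᵥ x) ⬝ᵥ M *ᵥ (B *ᵥ x) := by
  rw [← mulVec_mulVec, ← mulVec_mulVec, dotProduct_transpose_mulVec, dotProduct_comm]

lemma dotProduct_mulVec_le_of_le {M M' : Matrix k k ℝ} (h : M ≤ M') (x : k → ℝ) :
    x ⬝ᵥ M *ᵥ x ≤ x ⬝ᵥ M' *ᵥ x := by
  have := (le_iff.1 h).dotProduct_mulVec_nonneg x
  rwa [star_trivial, sub_mulVec, dotProduct_sub, sub_nonneg] at this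

lemma le_of_forall_dotProduct_mulVec_le {M M' : Matrix k k ℝ} (hM : M.IsHermitian)
    (hM' : M'.IsHermitian) (h : ∀ x, x ⬝ᵥ M *ᵥ x ≤ x ⬝ᵥ M' *ᵥ x) : M ≤ M' :=
  le_iff.2 <| .of_dotProduct_mulVec_nonneg (hM'.sub hM) fun x => by
    rw [star_trivial, sub_mulVec, dotProduct_sub, sub_nonneg]; exact h x

lemma posDef_sum_smul {ι : Type*} [Fintype ι] {w : ι → ℝ} (hw : ∀ j, 0 ≤ w j)
    (hw_pos : ∃ j, 0 < w j) {D : ι → Matrix k k ℝ} (hD : ∀ j, (D j).PosDef) :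
    (∑ j, w j • D j).PosDef := by
  obtain ⟨j₀, hj₀⟩ := hw_pos
  have hpsd : (∑ j, w j • D j).PosSemidef :=
    posSemidef_sum _ fun j _ => (hD j).posSemidef.smul (hw j)
  refine .of_dotProduct_mulVec_pos hpsd.isHermitian fun x hx => ?_
  simp only [star_trivial, sum_mulVec, smul_mulVec, dotProduct_sum, dotProduct_smul, smul_eq_mul]
  refine Finset.sum_pos' (fun j _ => mul_nonneg (hw j) ?_) ⟨j₀, Finset.mem_univ _, ?_⟩
  · simpa using (hD j).posSemidef.dotProduct_mulVec_nonneg x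
  · simpa using mul_pos hj₀ ((hD j₀).dotProduct_mulVec_pos hx)

lemma eventually_smul_le [DecidableEq k] {P Q : Matrix k k ℝ} (hP : P.IsHermitian)
    (hQ : Q.PosDef) : ∀ᶠ ε in 𝓝[>] (0 : ℝ), ε • P ≤ Q := by
  cases isEmpty_or_nonempty k
  · exact .of_forall fun _ => (Subsingleton.elim _ _).le
  obtain ⟨r, hr, hrQ⟩ : ∃ r > 0, algebraMap ℝ _ r ≤ Q :=
    (CFC.exists_pos_algebraMap_le_iff hQ.isHermitian.isSelfAdjoint).2 fun _ hx =>
      (isStrictlyPositive_iff_posDef.2 hQ).spectrum_pos hx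
  obtain ⟨s, hs⟩ := (finite_real_spectrum (A := P)).bddAbove
  set s' := max s 1
  have hPs : P ≤ algebraMap ℝ _ s' :=
    le_algebraMap_of_spectrum_le fun _ hx => (hs hx).trans (le_max_left _ _)
  have hs' : 0 < s' := lt_max_of_lt_right one_pos
  filter_upwards [Ioo_mem_nhdsGT (div_pos hr hs')] with ε hε
  rw [Algebra.algebraMap_eq_smul_one] at hPs hrQ
  calc ε • P ≤ ε • s' • (1 : Matrix k k ℝ) := smul_le_smul_of_nonneg_left hPs hε.1.le
    _ = (ε * s') • 1 := smul_smul _ _ _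
    _ ≤ r • 1 := smul_le_smul_of_nonneg_right ((lt_div_iff₀ hs').1 hε.2).le zero_le_one
    _ ≤ Q := hrQ

lemma transpose_mul_inv_mul_le_of_mul_mul_transpose_le [DecidableEq k] {m : Type*} [Fintype m]
    [DecidableEq m] {M : Matrix m m ℝ} {S : Matrix k k ℝ} (hM : M.PosDef) (hS : S.PosDef)
    (B : Matrix m k ℝ) {c : ℝ} (hc : 0 < c) (h : B * S * Bᵀ ≤ c • M) :
    (B * S)ᵀ * M⁻¹ * (B * S) ≤ c • S := by
  have hcM : (c • M).PosDef := hM.smul hc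
  have := hS.isUnit.invertible
  have := hcM.isUnit.invertible
  have hBS : (B * S)ᴴ = S * Bᵀ := by
    rw [conjTranspose_mul, hS.isHermitian.eq, conjTranspose_eq_transpose_of_trivial]
  -- hypothesis and conclusion are the two Schur complement criteria for the same block matrix
  have hblocks : (fromBlocks (c • M) (B * S) (B * S)ᴴ S).PosSemidef := by
    refine (PosDef.fromBlocks₂₂ _ _ hS).2 ?_
    rwa [hBS, mul_inv_cancel_right_of_invertible, ← Matrix.mul_assoc]
  have hschur := (PosDef.fromBlocks₁₁ _ _ hcM).1 hblocks
  have heq : c • S - (B * S)ᵀ * M⁻¹ * (B * S) = c • (S - (B * S)ᴴ * (c • M)⁻¹ * (B * S)) := by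
    have hinv : (c • M)⁻¹ = c⁻¹ • M⁻¹ := inv_eq_left_inv <| by
      rw [smul_mul_smul_comm, inv_mul_cancel₀ hc.ne', nonsing_inv_mul _ hM.det_pos.ne'.isUnit,
        one_smul]
    rw [hinv, smul_sub, Matrix.mul_smul, Matrix.smul_mul, smul_smul]
    simp [hc.ne', conjTranspose_eq_transpose_of_trivial]
  rw [le_iff, heq]
  exact hschur.smul hc.le

lemma dotProduct_mulVec_le_sum_of_le_inv [DecidableEq k] {ι : Type*} [Fintype ι]
    {S : Matrix k k ℝ} (hS : S.PosDef) {w : ι → ℝ} (hw : ∀ j, 0 ≤ w j) {H : ι → Matrix k k ℝ}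
    (hH : ∀ j, (H j).PosSemidef) (hHS : ∑ j, w j • H j ≤ S⁻¹) (X : ι → k → ℝ) :
    (∑ j, w j • (H j *ᵥ X j)) ⬝ᵥ S *ᵥ (∑ j, w j • (H j *ᵥ X j))
      ≤ ∑ j, w j * (X j ⬝ᵥ H j *ᵥ X j) := by
  set z := ∑ j, w j • (H j *ᵥ X j)
  set y := S *ᵥ z
  have hyz : S⁻¹ *ᵥ y = z := by
    rw [mulVec_mulVec, nonsing_inv_mul _ hS.det_pos.ne'.isUnit, one_mulVec]
  have hcross : ∑ j, w j * (y ⬝ᵥ H j *ᵥ X j) = y ⬝ᵥ z := by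
    simp only [z, dotProduct_sum, dotProduct_smul, smul_eq_mul]
  have hdiag : ∑ j, w j * (y ⬝ᵥ H j *ᵥ y) ≤ y ⬝ᵥ z := by
    have := dotProduct_mulVec_le_of_le hHS y
    simpa only [hyz, sum_mulVec, smul_mulVec, dotProduct_sum, dotProduct_smul, smul_eq_mul]
      using this
  have hsq : 0 ≤ ∑ j, w j * ((X j - y) ⬝ᵥ H j *ᵥ (X j - y)) :=
    Finset.sum_nonneg fun j _ => mul_nonneg (hw j) (by
      simpa using (hH j).dotProduct_mulVec_nonneg (X j - y))
  -- expand `0 ≤ ∑ⱼ wⱼ (Xⱼ - y)ᵀ Hⱼ (Xⱼ - y)` at the minimiser `y = S z`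
  have hexpand : ∀ j, w j * ((X j - y) ⬝ᵥ H j *ᵥ (X j - y)) = w j * (X j ⬝ᵥ H j *ᵥ X j)
      - 2 * (w j * (y ⬝ᵥ H j *ᵥ X j)) + w j * (y ⬝ᵥ H j *ᵥ y) := fun j => by
    rw [mulVec_sub, dotProduct_sub, sub_dotProduct, sub_dotProduct,
      (hH j).isHermitian.dotProduct_mulVec_comm (X j) y]
    ring
  simp only [hexpand, Finset.sum_add_distrib, Finset.sum_sub_distrib, ← Finset.mul_sum,
    hcross] at hsq
  rw [show z ⬝ᵥ S *ᵥ z = y ⬝ᵥ z from dotProduct_comm _ _]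
  linarith

section Blocks

variable {ι κ : Type*}

lemma isHermitian_of_blocks [DecidableEq ι] {Qc : Matrix (ι × κ) (ι × κ) ℝ}
    {B : ι → Matrix κ κ ℝ} (hQc : ∀ p p', Qc p p' = if p.1 = p'.1 then B p.1 p.2 p'.2 else 0)
    (hB : ∀ i, (B i).IsHermitian) : Qc.IsHermitian := by
  ext p p'
  rw [conjTranspose_apply, star_trivial, hQc, hQc]
  by_cases h : p.1 = p'.1
  · rw [if_pos h.symm, if_pos h, h, ← (hB p'.1).apply p.2 p'.2, star_trivial]
  · rw [if_neg (Ne.symm h), if_neg h]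

variable [Fintype ι] [Fintype κ]

lemma dotProduct_mulVec_eq_sum_of_blocks [DecidableEq ι] {Qc : Matrix (ι × κ) (ι × κ) ℝ}
    {B : ι → Matrix κ κ ℝ} (hQc : ∀ p p', Qc p p' = if p.1 = p'.1 then B p.1 p.2 p'.2 else 0)
    (x : ι × κ → ℝ) :
    x ⬝ᵥ Qc *ᵥ x = ∑ i, Function.curry x i ⬝ᵥ B i *ᵥ Function.curry x i := by
  simp [dotProduct, mulVec, hQc, Fintype.sum_prod_type, ite_mul, Finset.sum_ite_eq]

lemma curry_mulVec_of_blocks {Ac : Matrix (ι × κ) (ι × κ) ℝ} {L : Matrix ι ι ℝ}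
    {F : ι → ι → Matrix κ κ ℝ} (hAc : ∀ p p', Ac p p' = L p.1 p'.1 * F p.1 p'.1 p.2 p'.2)
    (x : ι × κ → ℝ) (i : ι) :
    Function.curry (Ac *ᵥ x) i = ∑ j, L i j • (F i j *ᵥ Function.curry x j) := by
  ext a
  simp [mulVec, dotProduct, hAc, Fintype.sum_prod_type, Finset.mul_sum, mul_assoc]

theorem transpose_mul_mul_le_smul_of_blocks [DecidableEq ι] [DecidableEq κ] {L : Matrix ι ι ℝ}
    (hL : ∀ i j, 0 ≤ L i j) {v : ι → ℝ} (hv : ∀ i, 0 ≤ v i) (hvL : ∀ j, ∑ i, v i * L i j = v j)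
    {W Pbar G : ι → Matrix κ κ ℝ} (hW : ∀ i, (W i).PosSemidef) (hPbar : ∀ i, (Pbar i).PosDef)
    (hinfo : ∀ i, ∑ j, L i j • W j ≤ (Pbar i)⁻¹) {β : ℝ} (hβ : 0 ≤ β)
    (hG : ∀ i, (G i)ᵀ * W i * G i ≤ β • Pbar i) {Ac Qc : Matrix (ι × κ) (ι × κ) ℝ}
    (hAc : ∀ p p', Ac p p' = L p.1 p'.1 * (G p.1 * W p'.1) p.2 p'.2)
    (hQc : ∀ p p', Qc p p' = if p.1 = p'.1 then v p.1 * W p.1 p.2 p'.2 else 0) :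
    Acᵀ * Qc * Ac ≤ β • Qc := by
  have hQblocks : ∀ p p', Qc p p' = if p.1 = p'.1 then (v p.1 • W p.1) p.2 p'.2 else 0 := hQc
  have hQform := dotProduct_mulVec_eq_sum_of_blocks (B := fun i => v i • W i) hQblocks
  have hQherm : Qc.IsHermitian :=
    isHermitian_of_blocks hQblocks fun i => (hW i).isHermitian.smul (IsSelfAdjoint.all _)
  have hAQAherm : (Acᵀ * Qc * Ac).IsHermitian := by
    simpa [conjTranspose_eq_transpose_of_trivial] using isHermitian_conjTranspose_mul_mul Ac hQherm
  refine le_of_forall_dotProduct_mulVec_le hAQAherm (hQherm.smul (IsSelfAdjoint.all _))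
    fun x => ?_
  set X := Function.curry x
  set z := fun i => ∑ j, L i j • (W j *ᵥ X j)
  have hAx : ∀ i, Function.curry (Ac *ᵥ x) i = G i *ᵥ z i := fun i => by
    simp only [curry_mulVec_of_blocks (F := fun i j => G i * W j) hAc, z, ← mulVec_mulVec,
      mulVec_sum, mulVec_smul, X]
  have hnode : ∀ i, (G i *ᵥ z i) ⬝ᵥ W i *ᵥ (G i *ᵥ z i)
      ≤ β * ∑ j, L i j * (X j ⬝ᵥ W j *ᵥ X j) := fun i => by
    calc (G i *ᵥ z i) ⬝ᵥ W i *ᵥ (G i *ᵥ z i) = z i ⬝ᵥ ((G i)ᵀ * W i * G i) *ᵥ z i :=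
          (dotProduct_transpose_mul_mul_mulVec _ _ _).symm
      _ ≤ z i ⬝ᵥ (β • Pbar i) *ᵥ z i := dotProduct_mulVec_le_of_le (hG i) _
      _ = β * (z i ⬝ᵥ Pbar i *ᵥ z i) := by rw [smul_mulVec, dotProduct_smul, smul_eq_mul]
      _ ≤ β * ∑ j, L i j * (X j ⬝ᵥ W j *ᵥ X j) := mul_le_mul_of_nonneg_left
          (dotProduct_mulVec_le_sum_of_le_inv (hPbar i) (hL i) hW (hinfo i) X) hβ
  calc x ⬝ᵥ (Acᵀ * Qc * Ac) *ᵥ x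
      = ∑ i, v i * ((G i *ᵥ z i) ⬝ᵥ W i *ᵥ (G i *ᵥ z i)) := by
        simp only [dotProduct_transpose_mul_mul_mulVec, hQform, hAx, smul_mulVec, dotProduct_smul,
          smul_eq_mul]
    _ ≤ ∑ i, v i * (β * ∑ j, L i j * (X j ⬝ᵥ W j *ᵥ X j)) :=
        Finset.sum_le_sum fun i _ => mul_le_mul_of_nonneg_left (hnode i) (hv i)
    _ = β * ∑ j, (∑ i, v i * L i j) * (X j ⬝ᵥ W j *ᵥ X j) := by
        simp only [Finset.mul_sum, Finset.sum_mul]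
        rw [Finset.sum_comm]
        exact Finset.sum_congr rfl fun j _ => Finset.sum_congr rfl fun i _ => by ring
    _ = x ⬝ᵥ (β • Qc) *ᵥ x := by
        simp only [hvL, smul_mulVec, dotProduct_smul, hQform, smul_eq_mul, X]

end Blocks

end Matrix

theorem hcre_lyapunov_contraction_general
    (n N : ℕ)
    (m : Fin N → ℕ)
    (A : Matrix (Fin n) (Fin n) ℝ)
    (C : ∀ i : Fin N, Matrix (Fin (m i)) (Fin n) ℝ)
    (Q : Matrix (Fin n) (Fin n) ℝ) (hQ : Q.PosDef)
    (R : ∀ i : Fin N, Matrix (Fin (m i)) (Fin (m i)) ℝ) (hR : ∀ i, (R i).PosDef)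
    (L : Matrix (Fin N) (Fin N) ℝ)
    (hLnonneg : ∀ i j, 0 ≤ L i j) (hLrow : ∀ i, ∑ j, L i j = 1)
    (P : Fin N → Matrix (Fin n) (Fin n) ℝ) (hPpos : ∀ i, (P i).PosDef)
    (hsol : ∀ i, P i =
      A * (∑ j, (L i j • (P j)⁻¹ + L i j • ((C j)ᵀ * (R j)⁻¹ * C j)))⁻¹ * Aᵀ + Q)
    (Pbar : Fin N → Matrix (Fin n) (Fin n) ℝ)
    (hPbar : ∀ i, Pbar i = (∑ j, L i j • ((P j)⁻¹ + (C j)ᵀ * (R j)⁻¹ * C j))⁻¹)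
    (Acal : Matrix (Fin N × Fin n) (Fin N × Fin n) ℝ)
    (hAcal : ∀ p q : Fin N × Fin n,
      Acal p q = L p.1 q.1 * ((A * Pbar p.1 * (P q.1)⁻¹) p.2 q.2))
    (qv : Fin N → ℝ) (hqv : ∀ i, 0 < qv i)
    (hqL : ∀ j, ∑ i, qv i * L i j = qv j)
    (Qcal : Matrix (Fin N × Fin n) (Fin N × Fin n) ℝ)
    (hQcal : ∀ p q : Fin N × Fin n,
      Qcal p q = if p.1 = q.1 then qv p.1 * ((P p.1)⁻¹ p.2 q.2) else 0) :
    ∃ β : ℝ, 0 < β ∧ β < 1 ∧ (β • Qcal - Acalᵀ * Qcal * Acal).PosSemidef := by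
  have hS : ∀ j, ((C j)ᵀ * (R j)⁻¹ * C j).PosSemidef := fun j => by
    simpa [conjTranspose_eq_transpose_of_trivial] using
      (hR j).inv.posSemidef.conjTranspose_mul_mul_same (C j)
  have hrow : ∀ i, ∃ j, 0 < L i j := fun i =>
    ((Finset.sum_pos_iff_of_nonneg fun j _ => hLnonneg i j).1 (by rw [hLrow i]; exact one_pos)).imp
      fun _ hj => hj.2
  have hinfoPD : ∀ i, (∑ j, L i j • ((P j)⁻¹ + (C j)ᵀ * (R j)⁻¹ * C j)).PosDef := fun i =>
    posDef_sum_smul (hLnonneg i) (hrow i) fun j => (hPpos j).inv.add_posSemidef (hS j)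
  have hPbarPD : ∀ i, (Pbar i).PosDef := fun i => hPbar i ▸ (hinfoPD i).inv
  have hRiccati : ∀ i, A * Pbar i * Aᵀ = P i - Q := fun i => by
    rw [hPbar i, eq_sub_iff_add_eq, hsol i]
    simp only [smul_add]
  obtain ⟨ε, ⟨hε0, hε1⟩, hεQ⟩ : ∃ ε ∈ Set.Ioo (0 : ℝ) 1, ∀ i, ε • P i ≤ Q :=
    (Eventually.and (Ioo_mem_nhdsGT one_pos)
      (eventually_all.2 fun i => eventually_smul_le (hPpos i).isHermitian hQ)).exists
  refine ⟨1 - ε, by linarith, by linarith, le_iff.1 ?_⟩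
  refine transpose_mul_mul_le_smul_of_blocks hLnonneg (fun i => (hqv i).le) hqL
    (fun i => (hPpos i).inv.posSemidef) hPbarPD (fun i => ?_) (by linarith)
    (G := fun i => A * Pbar i) (fun i => ?_) hAcal hQcal
  · rw [hPbar i, nonsing_inv_nonsing_inv _ (hinfoPD i).det_pos.ne'.isUnit, le_iff]
    simp only [smul_add, Finset.sum_add_distrib, add_sub_cancel_left]
    exact posSemidef_sum _ fun j _ => (hS j).smul (hLnonneg i j)
  · refine transpose_mul_inv_mul_le_of_mul_mul_transpose_le (hPpos i) (hPbarPD i) A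
      (by linarith) ?_
    rw [hRiccati i, sub_smul, one_smul]
    exact sub_le_sub_left (hεQ i) _

/-- For the unique positive definite solutions of the HCREs, the
steady-state block matrix `𝒜` with `(i,j)` block `l_{ij} A P̄_i P_j⁻¹` and the block
diagonal matrix `𝒬 = diag(q₁ P₁⁻¹, …, q_N P_N⁻¹)` (with `q` a positive left
Perron–Frobenius eigenvector of `L`) satisfy `𝒜ᵀ 𝒬 𝒜 ≤ β 𝒬` for some `β ∈ (0,1)`. -/
theorem hcre_lyapunov_contraction
    (n N : ℕ) (hn : 0 < n) (hN : 0 < N)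
    (m : Fin N → ℕ) (hm : ∀ i, 0 < m i)
    (A : Matrix (Fin n) (Fin n) ℝ) (hA : IsUnit A.det)
    (C : ∀ i : Fin N, Matrix (Fin (m i)) (Fin n) ℝ)
    (hObs : (∑ k ∈ Finset.range n, (A ^ k)ᵀ * (∑ i, (C i)ᵀ * C i) * A ^ k).PosDef)
    (Q : Matrix (Fin n) (Fin n) ℝ) (hQ : Q.PosDef)
    (R : ∀ i : Fin N, Matrix (Fin (m i)) (Fin (m i)) ℝ) (hR : ∀ i, (R i).PosDef)
    (L : Matrix (Fin N) (Fin N) ℝ)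
    (hLnonneg : ∀ i j, 0 ≤ L i j) (hLrow : ∀ i, ∑ j, L i j = 1)
    (hLprim : ∃ k : ℕ, 0 < k ∧ ∀ i j, 0 < (L ^ k) i j)
    (P : Fin N → Matrix (Fin n) (Fin n) ℝ) (hPpos : ∀ i, (P i).PosDef)
    (hsol : ∀ i, P i =
      A * (∑ j, (L i j • (P j)⁻¹ + L i j • ((C j)ᵀ * (R j)⁻¹ * C j)))⁻¹ * Aᵀ + Q)
    (Pbar : Fin N → Matrix (Fin n) (Fin n) ℝ)
    (hPbar : ∀ i, Pbar i = (∑ j, L i j • ((P j)⁻¹ + (C j)ᵀ * (R j)⁻¹ * C j))⁻¹)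
    (Acal : Matrix (Fin N × Fin n) (Fin N × Fin n) ℝ)
    (hAcal : ∀ p q : Fin N × Fin n,
      Acal p q = L p.1 q.1 * ((A * Pbar p.1 * (P q.1)⁻¹) p.2 q.2))
    (qv : Fin N → ℝ) (hqv : ∀ i, 0 < qv i)
    (hqL : ∀ j, ∑ i, qv i * L i j = qv j)
    (Qcal : Matrix (Fin N × Fin n) (Fin N × Fin n) ℝ)
    (hQcal : ∀ p q : Fin N × Fin n,
      Qcal p q = if p.1 = q.1 then qv p.1 * ((P p.1)⁻¹ p.2 q.2) else 0) :
    ∃ β : ℝ, 0 < β ∧ β < 1 ∧ (β • Qcal - Acalᵀ * Qcal * Acal).PosSemidef :=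
  hcre_lyapunov_contraction_general n N m A C Q hQ R hR L hLnonneg hLrow P hPpos hsol Pbar hPbar
    Acal hAcal qv hqv hqL Qcal hQcal
end

section
/- Let {P_i}_{i=1}^N be the unique group of positive definite solutions to the HCREs, define P̄_i = (∑_{j=1}^N l_{ij} (P_j^{-1} + C_jᵀ R_j^{-1} C_j))^{-1}, and let 𝒜 be the nN×nN block matrix whose (i,j) block is l_{ij} A P̄_i P_j^{-1}. Then 𝒜 is Schur stable, i.e. the spectral radius of 𝒜 is strictly less than 1. -/
open Matrix

/-!
Measure the `i`-th block of `x` by `qᵢ(x) = xᵢᵀ Pᵢ⁻¹ xᵢ`. One step of `𝒜` is one step of the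
coupled Riccati recursion: combining `Pᵢ = A P̄ᵢ Aᵀ + Q` with the variational formula
`uᵀ G⁻¹ u = max_z (2 zᵀ u - zᵀ G z)` bounds `qᵢ(𝒜x)` plus a `Q`-term by the `L`-weighted average
of the `q_j(x)`, and `Q > 0` makes the bound strict as soon as `(𝒜x)ᵢ ≠ 0`. So the largest of
the `qᵢ` strictly decreases under `𝒜`. If `a` and `b` are the real and imaginary parts of an
eigenvector with eigenvalue `μ`, then `𝒜` maps `(a, b)` to a rotation of it scaled by `|μ|`,
which multiplies every `qᵢ(a) + qᵢ(b)` by `|μ|²`; hence `|μ| < 1`.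
-/

namespace QuadraticMap

variable {R M N : Type*} [CommRing R] [AddCommGroup M] [Module R M] [AddCommGroup N] [Module R N]

theorem map_smul_sub_smul_add_map_smul_add_smul (Q : QuadraticMap R M N) (c s : R) (a b : M) :
    Q (c • a - s • b) + Q (s • a + c • b) = (c ^ 2 + s ^ 2) • (Q a + Q b) := by
  have hadd (x y : M) : Q (x + y) = Q x + Q y + polar Q x y := by
    rw [polar]; abel
  rw [sub_eq_add_neg, ← neg_smul, hadd, hadd, Q.map_smul, Q.map_smul, Q.map_smul,
    Q.map_smul, polar_smul_left, polar_smul_right, polar_smul_left, polar_smul_right]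
  module

end QuadraticMap

namespace Matrix

variable {κ ι : Type*} [Fintype κ]

section

variable [Fintype ι]

theorem exists_mulVec_eq_smul_of_mem_spectrum [DecidableEq κ] {M : Matrix κ κ ℂ} {μ : ℂ}
    (hμ : μ ∈ spectrum ℂ M) : ∃ v ≠ 0, M *ᵥ v = μ • v := by
  rw [← spectrum_toLin', ← Module.End.hasEigenvalue_iff_mem_spectrum] at hμ
  obtain ⟨v, hv⟩ := hμ.exists_hasEigenvector
  exact ⟨v, hv.2, by simpa using hv.apply_eq_smul⟩

theorem re_map_ofReal_mulVec (M : Matrix κ κ ℝ) (v : κ → ℂ) (k : κ) :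
    ((M.map Complex.ofReal *ᵥ v) k).re = (M *ᵥ fun l => (v l).re) k := by
  simp [mulVec, dotProduct, Complex.re_sum]

theorem im_map_ofReal_mulVec (M : Matrix κ κ ℝ) (v : κ → ℂ) (k : κ) :
    ((M.map Complex.ofReal *ᵥ v) k).im = (M *ᵥ fun l => (v l).im) k := by
  simp [mulVec, dotProduct, Complex.im_sum]

theorem exists_re_im_of_mem_spectrum_map_ofReal [DecidableEq κ] {M : Matrix κ κ ℝ} {μ : ℂ}
    (hμ : μ ∈ spectrum ℂ (M.map Complex.ofReal)) :
    ∃ a b : κ → ℝ, (a ≠ 0 ∨ b ≠ 0) ∧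
      M *ᵥ a = μ.re • a - μ.im • b ∧ M *ᵥ b = μ.im • a + μ.re • b := by
  obtain ⟨v, hv0, hv⟩ := exists_mulVec_eq_smul_of_mem_spectrum hμ
  refine ⟨fun k => (v k).re, fun k => (v k).im, ?_, funext fun k => ?_, funext fun k => ?_⟩
  · by_contra! h
    exact hv0 (funext fun k => Complex.ext (congrFun h.1 k) (congrFun h.2 k))
  · simp [← re_map_ofReal_mulVec, hv]
  · simp only [← im_map_ofReal_mulVec, hv, Pi.smul_apply, smul_eq_mul, Complex.mul_im,
      Pi.add_apply]
    ring

theorem norm_lt_one_of_mem_spectrum_of_quadraticForm_contraction [DecidableEq κ]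
    (M : Matrix κ κ ℝ) (q : ι → QuadraticForm ℝ (κ → ℝ))
    (hq : ∀ i x, 0 ≤ q i x) (hdef : ∀ x, x ≠ 0 → ∃ i, 0 < q i x)
    (w : Matrix ι ι ℝ) (hw : ∀ i j, 0 ≤ w i j) (hw1 : ∀ i, ∑ j, w i j ≤ 1)
    (hle : ∀ x i, q i (M *ᵥ x) ≤ ∑ j, w i j * q j x)
    (hlt : ∀ x i, 0 < q i (M *ᵥ x) → q i (M *ᵥ x) < ∑ j, w i j * q j x)
    {μ : ℂ} (hμ : μ ∈ spectrum ℂ (M.map Complex.ofReal)) : ‖μ‖ < 1 := by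
  obtain ⟨a, b, hab, hMa, hMb⟩ := exists_re_im_of_mem_spectrum_map_ofReal hμ
  have hrot (i : ι) : q i (M *ᵥ a) + q i (M *ᵥ b) = ‖μ‖ ^ 2 * (q i a + q i b) := by
    rw [hMa, hMb, QuadraticMap.map_smul_sub_smul_add_map_smul_add_smul, Complex.sq_norm,
      Complex.normSq_apply, smul_eq_mul]
    ring
  obtain ⟨j, hj⟩ : ∃ j, 0 < q j a + q j b := by
    rcases hab with ha | hb
    · obtain ⟨j, hj⟩ := hdef a ha
      exact ⟨j, by linarith [hq j b]⟩
    · obtain ⟨j, hj⟩ := hdef b hb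
      exact ⟨j, by linarith [hq j a]⟩
  obtain ⟨i, -, hi⟩ := Finset.exists_max_image Finset.univ (fun i => q i a + q i b)
    ⟨j, Finset.mem_univ j⟩
  have hpos : 0 < q i a + q i b := hj.trans_le (hi j (Finset.mem_univ j))
  have hmean : ∑ j, w i j * (q j a + q j b) ≤ q i a + q i b :=
    calc ∑ j, w i j * (q j a + q j b) ≤ ∑ j, w i j * (q i a + q i b) :=
          Finset.sum_le_sum fun j _ =>
            mul_le_mul_of_nonneg_left (hi j (Finset.mem_univ j)) (hw i j)
      _ = (∑ j, w i j) * (q i a + q i b) := (Finset.sum_mul _ _ _).symm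
      _ ≤ q i a + q i b := mul_le_of_le_one_left hpos.le (hw1 i)
  have hsplit : ∑ j, w i j * (q j a + q j b) = ∑ j, w i j * q j a + ∑ j, w i j * q j b := by
    simp only [mul_add, Finset.sum_add_distrib]
  by_contra! hμ1
  have hge : q i a + q i b ≤ q i (M *ᵥ a) + q i (M *ᵥ b) := by
    rw [hrot]; exact le_mul_of_one_le_left hpos.le (one_le_pow₀ hμ1)
  rcases (hq i (M *ᵥ a)).lt_or_eq with ha | ha
  · linarith [hlt a i ha, hle b i]
  · rcases (hq i (M *ᵥ b)).lt_or_eq with hb | hb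
    · linarith [hle a i, hlt b i hb]
    · linarith

theorem PosSemidef.two_mul_dotProduct_mulVec_le {H : Matrix κ κ ℝ} (hH : H.PosSemidef)
    (x y : κ → ℝ) : 2 * (x ⬝ᵥ H *ᵥ y) ≤ x ⬝ᵥ H *ᵥ x + y ⬝ᵥ H *ᵥ y := by
  have hsymm : y ⬝ᵥ H *ᵥ x = x ⬝ᵥ H *ᵥ y := by
    rw [dotProduct_mulVec, ← mulVec_transpose, ← conjTranspose_eq_transpose_of_trivial,
      hH.1.eq, dotProduct_comm]
  have h := hH.dotProduct_mulVec_nonneg (x - y)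
  simp only [star_trivial, mulVec_sub, dotProduct_sub, sub_dotProduct] at h
  linarith

theorem dotProduct_inv_mulVec_sum_smul_add_le [DecidableEq κ] (c : ι → ℝ) (hc : ∀ j, 0 ≤ c j)
    (H T : ι → Matrix κ κ ℝ) (hH : ∀ j, (H j).PosSemidef) (hT : ∀ j, (T j).PosSemidef)
    (e : ι → κ → ℝ) :
    (∑ j, c j • (H j *ᵥ e j)) ⬝ᵥ (∑ j, c j • (H j + T j))⁻¹ *ᵥ ∑ j, c j • (H j *ᵥ e j)
      ≤ ∑ j, c j * (e j ⬝ᵥ H j *ᵥ e j) := by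
  set G := ∑ j, c j • (H j + T j)
  set u := ∑ j, c j • (H j *ᵥ e j)
  by_cases hG : IsUnit G.det
  swap
  · rw [nonsing_inv_apply_not_isUnit _ hG, zero_mulVec, dotProduct_zero]
    exact Finset.sum_nonneg fun j _ =>
      mul_nonneg (hc j) (by simpa using (hH j).dotProduct_mulVec_nonneg (e j))
  set z := G⁻¹ *ᵥ u
  have hGz : G *ᵥ z = u := by rw [mulVec_mulVec, mul_nonsing_inv _ hG, one_mulVec]
  -- `u ⬝ G⁻¹ u` is the maximum of `2 z ⬝ u - z ⬝ G z`, attained at `z = G⁻¹ u`.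
  have hvar : u ⬝ᵥ G⁻¹ *ᵥ u = 2 * (z ⬝ᵥ u) - z ⬝ᵥ G *ᵥ z := by
    rw [hGz, dotProduct_comm]; ring
  have hzu : z ⬝ᵥ u = ∑ j, c j * (z ⬝ᵥ H j *ᵥ e j) := by
    simp [u, dotProduct_sum, dotProduct_smul]
  have hzGz : z ⬝ᵥ G *ᵥ z = ∑ j, c j * (z ⬝ᵥ H j *ᵥ z + z ⬝ᵥ T j *ᵥ z) := by
    simp [G, sum_mulVec, add_mulVec, smul_mulVec, dotProduct_sum, dotProduct_smul,
      dotProduct_add, mul_add]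
  rw [hvar, hzu, hzGz, Finset.mul_sum, ← Finset.sum_sub_distrib]
  refine Finset.sum_le_sum fun j _ => ?_
  have hTz : 0 ≤ z ⬝ᵥ T j *ᵥ z := by simpa using (hT j).dotProduct_mulVec_nonneg z
  nlinarith [(hH j).two_mul_dotProduct_mulVec_le z (e j), hc j]

theorem dotProduct_inv_mulVec_add_le [DecidableEq κ] {A Pb Q P : Matrix κ κ ℝ}
    (hPb : Pb.PosSemidef) (hP : IsUnit P.det) (hPeq : P = A * Pb * Aᵀ + Q) (u : κ → ℝ) :
    ((A * Pb) *ᵥ u) ⬝ᵥ P⁻¹ *ᵥ (A * Pb) *ᵥ u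
      + (P⁻¹ *ᵥ (A * Pb) *ᵥ u) ⬝ᵥ Q *ᵥ P⁻¹ *ᵥ (A * Pb) *ᵥ u ≤ u ⬝ᵥ Pb *ᵥ u := by
  set f := (A * Pb) *ᵥ u
  set y := P⁻¹ *ᵥ f
  have hPy : P *ᵥ y = f := by rw [mulVec_mulVec, mul_nonsing_inv _ hP, one_mulVec]
  have hyf : y ⬝ᵥ f = (Aᵀ *ᵥ y) ⬝ᵥ Pb *ᵥ u := by
    rw [mulVec_transpose, ← dotProduct_mulVec, mulVec_mulVec]
  have hyPy : y ⬝ᵥ P *ᵥ y = (Aᵀ *ᵥ y) ⬝ᵥ Pb *ᵥ (Aᵀ *ᵥ y) + y ⬝ᵥ Q *ᵥ y := by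
    rw [hPeq, add_mulVec, dotProduct_add, ← mulVec_mulVec, ← mulVec_mulVec, dotProduct_mulVec,
      ← mulVec_transpose]
  rw [hPy] at hyPy
  rw [dotProduct_comm]
  linarith [hPb.two_mul_dotProduct_mulVec_le (Aᵀ *ᵥ y) u]

theorem curry_mulVec_eq_sum_smul_mulVec {α : Type*} [Semiring α]
    (M : Matrix (ι × κ) (ι × κ) α) (L : Matrix ι ι α) (B : ι → ι → Matrix κ κ α)
    (hM : ∀ p q, M p q = L p.1 q.1 * B p.1 q.1 p.2 q.2) (x : ι × κ → α) (i : ι) :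
    Function.curry (M *ᵥ x) i = ∑ j, L i j • (B i j *ᵥ Function.curry x j) := by
  ext p
  simp [mulVec, dotProduct, Fintype.sum_prod_type, hM, Finset.mul_sum, mul_assoc]

end

section BlockForms

variable [DecidableEq κ]

noncomputable def blockQuadraticForm (D : ι → Matrix κ κ ℝ) (i : ι) :
    QuadraticForm ℝ (ι × κ → ℝ) :=
  (D i).toQuadraticForm'.comp (LinearMap.funLeft ℝ ℝ (Prod.mk i))

theorem blockQuadraticForm_apply (D : ι → Matrix κ κ ℝ) (i : ι) (x : ι × κ → ℝ) :
    blockQuadraticForm D i x = Function.curry x i ⬝ᵥ D i *ᵥ Function.curry x i := by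
  simp only [blockQuadraticForm, toQuadraticForm', QuadraticMap.comp_apply,
    LinearMap.BilinMap.toQuadraticMap_apply, toLinearMap₂'_apply']
  rfl

theorem blockQuadraticForm_nonneg {D : ι → Matrix κ κ ℝ} (hD : ∀ i, (D i).PosSemidef) (i : ι)
    (x : ι × κ → ℝ) : 0 ≤ blockQuadraticForm D i x := by
  simpa [blockQuadraticForm_apply] using (hD i).dotProduct_mulVec_nonneg (Function.curry x i)

theorem exists_blockQuadraticForm_pos {D : ι → Matrix κ κ ℝ} (hD : ∀ i, (D i).PosDef)
    {x : ι × κ → ℝ} (hx : x ≠ 0) : ∃ i, 0 < blockQuadraticForm D i x := by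
  obtain ⟨⟨i, p⟩, hip⟩ := Function.ne_iff.mp hx
  have hxi : Function.curry x i ≠ 0 := fun h => hip (congrFun h p)
  exact ⟨i, by simpa [blockQuadraticForm_apply] using (hD i).dotProduct_mulVec_pos hxi⟩

theorem blockQuadraticForm_riccati_mulVec_add_le [Fintype ι] (L : Matrix ι ι ℝ)
    (hL : ∀ i j, 0 ≤ L i j) (P T : ι → Matrix κ κ ℝ) (hP : ∀ i, (P i).PosDef)
    (hT : ∀ i, (T i).PosSemidef) (A Q : Matrix κ κ ℝ) (Pbar : ι → Matrix κ κ ℝ)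
    (hPbar : ∀ i, Pbar i = (∑ j, L i j • ((P j)⁻¹ + T j))⁻¹)
    (hRiccati : ∀ i, P i = A * Pbar i * Aᵀ + Q) (M : Matrix (ι × κ) (ι × κ) ℝ)
    (hM : ∀ p q, M p q = L p.1 q.1 * (A * Pbar p.1 * (P q.1)⁻¹) p.2 q.2)
    (x : ι × κ → ℝ) (i : ι) :
    blockQuadraticForm (fun j => (P j)⁻¹) i (M *ᵥ x)
        + ((P i)⁻¹ *ᵥ Function.curry (M *ᵥ x) i) ⬝ᵥ Q *ᵥ (P i)⁻¹ *ᵥ Function.curry (M *ᵥ x) i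
      ≤ ∑ j, L i j * blockQuadraticForm (fun j => (P j)⁻¹) j x := by
  have hPinv (j : ι) : ((P j)⁻¹).PosSemidef := (hP j).inv.posSemidef
  have hPbar_psd : (Pbar i).PosSemidef := by
    rw [hPbar i]
    exact (posSemidef_sum _ fun j _ => ((hPinv j).add (hT j)).smul (hL i j)).inv
  have hblock : Function.curry (M *ᵥ x) i
      = (A * Pbar i) *ᵥ ∑ j, L i j • ((P j)⁻¹ *ᵥ Function.curry x j) := by
    simp [curry_mulVec_eq_sum_smul_mulVec M L (fun i j => A * Pbar i * (P j)⁻¹) hM,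
      mulVec_sum, mulVec_smul, mulVec_mulVec]
  rw [blockQuadraticForm_apply, hblock]
  refine (dotProduct_inv_mulVec_add_le hPbar_psd (hP i).det_pos.ne'.isUnit
    (hRiccati i) _).trans ?_
  rw [hPbar i]
  simpa only [blockQuadraticForm_apply] using dotProduct_inv_mulVec_sum_smul_add_le (L i)
    (hL i) (fun j => (P j)⁻¹) T hPinv hT (Function.curry x)

end BlockForms

end Matrix

theorem hcre_steady_state_matrix_schur_stable_general
    (n N : ℕ)
    (m : Fin N → ℕ)
    (A : Matrix (Fin n) (Fin n) ℝ)
    (C : ∀ i : Fin N, Matrix (Fin (m i)) (Fin n) ℝ)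
    (Q : Matrix (Fin n) (Fin n) ℝ) (hQ : Q.PosDef)
    (R : ∀ i : Fin N, Matrix (Fin (m i)) (Fin (m i)) ℝ) (hR : ∀ i, (R i).PosDef)
    (L : Matrix (Fin N) (Fin N) ℝ)
    (hLnonneg : ∀ i j, 0 ≤ L i j) (hLrow : ∀ i, ∑ j, L i j = 1)
    (P : Fin N → Matrix (Fin n) (Fin n) ℝ) (hPpos : ∀ i, (P i).PosDef)
    (hsol : ∀ i, P i =
      A * (∑ j, (L i j • (P j)⁻¹ + L i j • ((C j)ᵀ * (R j)⁻¹ * C j)))⁻¹ * Aᵀ + Q)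
    (Pbar : Fin N → Matrix (Fin n) (Fin n) ℝ)
    (hPbar : ∀ i, Pbar i = (∑ j, L i j • ((P j)⁻¹ + (C j)ᵀ * (R j)⁻¹ * C j))⁻¹)
    (Acal : Matrix (Fin N × Fin n) (Fin N × Fin n) ℝ)
    (hAcal : ∀ p q : Fin N × Fin n,
      Acal p q = L p.1 q.1 * ((A * Pbar p.1 * (P q.1)⁻¹) p.2 q.2)) :
    ∀ μ ∈ spectrum ℂ (Acal.map Complex.ofReal), ‖μ‖ < 1 := by
  have hT (j : Fin N) : ((C j)ᵀ * (R j)⁻¹ * C j).PosSemidef := by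
    simpa using (hR j).inv.posSemidef.conjTranspose_mul_mul_same (C j)
  have hRiccati (i : Fin N) : P i = A * Pbar i * Aᵀ + Q := by
    simpa only [hPbar, smul_add] using hsol i
  have hcontract := blockQuadraticForm_riccati_mulVec_add_le L hLnonneg P _ hPpos hT A Q Pbar
    hPbar hRiccati Acal hAcal
  have hPinv (j : Fin N) : ((P j)⁻¹).PosDef := (hPpos j).inv
  intro μ hμ
  refine norm_lt_one_of_mem_spectrum_of_quadraticForm_contraction Acal _
    (blockQuadraticForm_nonneg fun j => (hPinv j).posSemidef)
    (fun x hx => exists_blockQuadraticForm_pos hPinv hx) L hLnonneg (fun i => (hLrow i).le)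
    (fun x i => (le_add_of_nonneg_right (by simpa only [star_trivial] using
      hQ.posSemidef.dotProduct_mulVec_nonneg _)).trans (hcontract x i))
    (fun x i hpos => ?_) hμ
  have hy : (P i)⁻¹ *ᵥ Function.curry (Acal *ᵥ x) i ≠ 0 := by
    intro hy
    rw [blockQuadraticForm_apply, hy, dotProduct_zero] at hpos
    exact hpos.false
  have hQy := hQ.dotProduct_mulVec_pos hy
  rw [star_trivial] at hQy
  exact (lt_add_of_pos_right _ hQy).trans_le (hcontract x i)

/-- For the unique positive definite solutions of the HCREs, the
steady-state block matrix `𝒜` with `(i,j)` block `l_{ij} A P̄_i P_j⁻¹` is Schur stable: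
every complex eigenvalue of `𝒜` has modulus strictly less than 1. -/
theorem hcre_steady_state_matrix_schur_stable
    (n N : ℕ) (hn : 0 < n) (hN : 0 < N)
    (m : Fin N → ℕ) (hm : ∀ i, 0 < m i)
    (A : Matrix (Fin n) (Fin n) ℝ) (hA : IsUnit A.det)
    (C : ∀ i : Fin N, Matrix (Fin (m i)) (Fin n) ℝ)
    (hObs : (∑ k ∈ Finset.range n, (A ^ k)ᵀ * (∑ i, (C i)ᵀ * C i) * A ^ k).PosDef)
    (Q : Matrix (Fin n) (Fin n) ℝ) (hQ : Q.PosDef)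
    (R : ∀ i : Fin N, Matrix (Fin (m i)) (Fin (m i)) ℝ) (hR : ∀ i, (R i).PosDef)
    (L : Matrix (Fin N) (Fin N) ℝ)
    (hLnonneg : ∀ i j, 0 ≤ L i j) (hLrow : ∀ i, ∑ j, L i j = 1)
    (hLprim : ∃ k : ℕ, 0 < k ∧ ∀ i j, 0 < (L ^ k) i j)
    (P : Fin N → Matrix (Fin n) (Fin n) ℝ) (hPpos : ∀ i, (P i).PosDef)
    (hsol : ∀ i, P i =
      A * (∑ j, (L i j • (P j)⁻¹ + L i j • ((C j)ᵀ * (R j)⁻¹ * C j)))⁻¹ * Aᵀ + Q)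
    (Pbar : Fin N → Matrix (Fin n) (Fin n) ℝ)
    (hPbar : ∀ i, Pbar i = (∑ j, L i j • ((P j)⁻¹ + (C j)ᵀ * (R j)⁻¹ * C j))⁻¹)
    (Acal : Matrix (Fin N × Fin n) (Fin N × Fin n) ℝ)
    (hAcal : ∀ p q : Fin N × Fin n,
      Acal p q = L p.1 q.1 * ((A * Pbar p.1 * (P q.1)⁻¹) p.2 q.2)) :
    ∀ μ ∈ spectrum ℂ (Acal.map Complex.ofReal), ‖μ‖ < 1 :=
  hcre_steady_state_matrix_schur_stable_general n N m A C Q hQ R hR L hLnonneg hLrow P hPpos hsol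
    Pbar hPbar Acal hAcal
end

section
/- Let ν = (ν_{ij}) be an N×N matrix with nonnegative entries that is primitive (some power of ν has all entries strictly positive). Then the modified harmonic-coupled Riccati equations P_i = A (∑_{j=1}^N l_{ij} P_j^{-1} + ν_{ij} C_jᵀ R_j^{-1} C_j)^{-1} Aᵀ + Q, i = 1, …, N, have a unique group of positive definite n×n solutions {P_i}_{i=1}^N. Moreover, for any positive definite initial matrices P_{1,0}, …, P_{N,0}, the iterates of the modified iterative law P_{i,k+1} = A (∑_{j=1}^N l_{ij} P_{j,k}^{-1} + ν_{ij} C_jᵀ R_j^{-1} C_j)^{-1} Aᵀ + Q converge entrywise to P_i as k → ∞, for every i ∈ {1, …, N}. -/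
/-!
Write `F(P)ᵢ = A (∑ⱼ lᵢⱼ Pⱼ⁻¹ + νᵢⱼ Sⱼ)⁻¹ Aᵀ + Q` with `Sⱼ = Cⱼᵀ Rⱼ⁻¹ Cⱼ`. Matrix inversion is
antitone in the Loewner order, so `F` is monotone and `F(P) ≥ Q`.

Existence: the iterates of `F` started at `Q` increase. For the information matrices,
`F(P)ᵢ⁻¹ ≥ γ A⁻ᵀ (∑ⱼ lᵢⱼ Pⱼ⁻¹ + νᵢⱼ Sⱼ) A⁻¹` with a uniform `γ > 0` (because `P ≥ Q`), and unrolling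
this `s` times bounds the information matrix of every later iterate by
`γ^(s+1) A^-(s+1)ᵀ (∑ₚ (Lˢν)ᵢₚ Sₚ) A^-(s+1)`. Once `Lˢ` is positive so is `Lˢν`, and `n`
consecutive such bounds add up to a congruent copy of the observability Gramian. Hence the iterates
are bounded, and being monotone they converge to a positive definite fixed point `P*`.

Uniqueness and convergence: `F(P) - Q` is subhomogeneous. Choosing `ρ ≥ 1` with `P* ≤ ρ Q`, the
bounds `λ⁻¹ P* ≤ P ≤ λ P*` imply the same bounds for `F(P)` with `λ` replaced by
`1 + (1 - ρ⁻¹)(λ - 1)`. Every positive definite tuple satisfies them for some `λ`, so all iterates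
converge to `P*`.
-/

open Matrix Filter Topology
open scoped MatrixOrder ComplexOrder

lemma exists_pos_forall_le {α : Type*} [Finite α] {f : α → ℝ} (hf : ∀ a, 0 < f a) :
    ∃ δ, 0 < δ ∧ ∀ a, δ ≤ f a := by
  obtain ⟨M, hM⟩ := Finite.exists_le fun a => (f a)⁻¹
  exact ⟨(max M 1)⁻¹, by positivity,
    fun a => inv_le_of_inv_le₀ (hf a) ((hM a).trans (le_max_left _ _))⟩

namespace Matrix

section RCLike

variable {𝕜 d : Type*} [RCLike 𝕜] {X Y : Matrix d d 𝕜}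

lemma PosDef.of_le (hX : X.PosDef) (h : X ≤ Y) : Y.PosDef := by
  simpa using hX.add_posSemidef (le_iff.mp h)

variable [Fintype d] [DecidableEq d]

lemma PosDef.isUnit_det (hX : X.PosDef) : IsUnit X.det :=
  (isUnit_iff_isUnit_det X).mp hX.isUnit

lemma PosDef.inv_anti (hX : X.PosDef) (h : X ≤ Y) : Y⁻¹ ≤ X⁻¹ := by
  have hY := hX.of_le h
  have hXu := hX.isUnit_det
  have hYu := hY.isUnit_det
  -- With `D = Y - X`: `X⁻¹ - Y⁻¹ = Y⁻¹ D Y⁻¹ + Y⁻¹ D X⁻¹ D Y⁻¹`, a sum of two congruences.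
  have key : X⁻¹ - Y⁻¹ =
      (Y⁻¹)ᴴ * (Y - X) * Y⁻¹ + ((Y - X) * Y⁻¹)ᴴ * X⁻¹ * ((Y - X) * Y⁻¹) := by
    rw [conjTranspose_mul, hY.1.inv.eq, (le_iff.mp h).1.eq]
    simp only [Matrix.mul_sub, Matrix.sub_mul, Matrix.mul_assoc,
      nonsing_inv_mul_cancel_left _ _ hXu, mul_nonsing_inv _ hYu, mul_nonsing_inv _ hXu,
      nonsing_inv_mul _ hYu, Matrix.mul_one, Matrix.one_mul]
    abel
  rw [le_iff, key]
  exact ((le_iff.mp h).conjTranspose_mul_mul_same _).add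
    (hX.inv.posSemidef.conjTranspose_mul_mul_same _)

lemma IsHermitian.exists_le_smul_one (hX : X.IsHermitian) :
    ∃ b : ℝ, 0 < b ∧ X ≤ b • 1 := by
  obtain ⟨b, hb⟩ := X.finite_real_spectrum.bddAbove
  refine ⟨max b 1, by positivity, ?_⟩
  rw [← Algebra.algebraMap_eq_smul_one, le_algebraMap_iff_spectrum_le hX.isSelfAdjoint]
  exact fun x hx => (hb hx).trans (le_max_left _ _)

lemma PosDef.exists_smul_one_le (hX : X.PosDef) : ∃ e : ℝ, 0 < e ∧ e • 1 ≤ X := by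
  have hspec := (StarOrderedRing.isStrictlyPositive_iff_spectrum_pos (R := ℝ) X).mp
    hX.isStrictlyPositive
  obtain ⟨e, he, hle⟩ := exists_pos_forall_le fun x : spectrum ℝ X => hspec x x.2
  refine ⟨e, he, ?_⟩
  rw [← Algebra.algebraMap_eq_smul_one, algebraMap_le_iff_le_spectrum hX.1.isSelfAdjoint]
  exact fun x hx => hle ⟨x, hx⟩

lemma PosDef.exists_le_smul (hY : Y.PosDef) (hX : X.IsHermitian) :
    ∃ t : ℝ, 0 < t ∧ X ≤ t • Y := by
  obtain ⟨b, hb, hXb⟩ := hX.exists_le_smul_one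
  obtain ⟨e, he, heY⟩ := hY.exists_smul_one_le
  refine ⟨b / e, by positivity, hXb.trans ?_⟩
  calc b • (1 : Matrix d d 𝕜) = (b / e) • e • (1 : Matrix d d 𝕜) := by
        rw [smul_smul, div_mul_cancel₀ _ he.ne']
    _ ≤ (b / e) • Y := smul_le_smul_of_nonneg_left heY (by positivity)

lemma exists_forall_le_smul {ι : Type*} [Finite ι] {X Y : ι → Matrix d d 𝕜}
    (hX : ∀ i, (X i).IsHermitian) (hY : ∀ i, (Y i).PosDef) :
    ∃ t : ℝ, 1 ≤ t ∧ ∀ i, X i ≤ t • Y i := by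
  choose t _ ht using fun i => (hY i).exists_le_smul (hX i)
  obtain ⟨M, hM⟩ := Finite.exists_le t
  exact ⟨max M 1, le_max_right _ _, fun i => (ht i).trans
    (smul_le_smul_of_nonneg_right ((hM i).trans (le_max_left _ _)) (hY i).posSemidef.nonneg)⟩

lemma inv_smul_le_of_le_smul {t : ℝ} (ht : 0 < t) (h : X ≤ t • Y) : t⁻¹ • X ≤ Y := by
  simpa [smul_smul, inv_mul_cancel₀ ht.ne'] using
    smul_le_smul_of_nonneg_left h (inv_nonneg.mpr ht.le)

end RCLike

section Real

variable {d e : Type*} [Fintype d] [Fintype e]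

lemma transpose_mul_mul_mono {X Y : Matrix d d ℝ} (h : X ≤ Y) (B : Matrix d e ℝ) :
    Bᵀ * X * B ≤ Bᵀ * Y * B := by
  rw [le_iff, ← Matrix.sub_mul, ← Matrix.mul_sub]
  simpa using (le_iff.mp h).conjTranspose_mul_mul_same B

lemma mul_mul_transpose_mono {X Y : Matrix d d ℝ} (h : X ≤ Y) (B : Matrix e d ℝ) :
    B * X * Bᵀ ≤ B * Y * Bᵀ := by
  simpa using transpose_mul_mul_mono h Bᵀ

lemma dotProduct_mulVec_mono {X Y : Matrix d d ℝ} (h : X ≤ Y) (x : d → ℝ) :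
    x ⬝ᵥ X *ᵥ x ≤ x ⬝ᵥ Y *ᵥ x := by
  simpa [sub_mulVec] using (le_iff.mp h).dotProduct_mulVec_nonneg x

lemma exists_smul_sum_le_sum_transpose_mul_inv_mul {ι : Type*} {m : ι → Type*} [Fintype ι]
    [∀ p, Fintype (m p)] [∀ p, DecidableEq (m p)] (C : ∀ p, Matrix (m p) d ℝ)
    {R : ∀ p, Matrix (m p) (m p) ℝ} (hR : ∀ p, (R p).PosDef) :
    ∃ ε : ℝ, 0 < ε ∧ ε • ∑ p, (C p)ᵀ * C p ≤ ∑ p, (C p)ᵀ * (R p)⁻¹ * C p := by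
  choose e he heR using fun p => (hR p).inv.exists_smul_one_le
  obtain ⟨ε, hε, hεe⟩ := exists_pos_forall_le he
  refine ⟨ε, hε, ?_⟩
  rw [Finset.smul_sum]
  refine Finset.sum_le_sum fun p _ => ?_
  simpa [Matrix.mul_smul, Matrix.smul_mul] using transpose_mul_mul_mono
    ((smul_le_smul_of_nonneg_right (hεe p) PosSemidef.one.nonneg).trans (heR p)) (C p)

variable [DecidableEq d]

lemma entry_eq_polarization {X : Matrix d d ℝ} (hX : X.IsHermitian) (a b : d) :
    X a b = ((Pi.single a 1 + Pi.single b 1) ⬝ᵥ X *ᵥ (Pi.single a 1 + Pi.single b 1)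
      - Pi.single a 1 ⬝ᵥ X *ᵥ Pi.single a 1 - Pi.single b 1 ⬝ᵥ X *ᵥ Pi.single b 1) / 2 := by
  have := hX.apply a b
  simp [mulVec_add, dotProduct_add, add_dotProduct] at *
  linarith

lemma inv_smul_of_ne_zero {t : ℝ} (ht : t ≠ 0) {X : Matrix d d ℝ} (hX : IsUnit X.det) :
    (t • X)⁻¹ = t⁻¹ • X⁻¹ := by
  simpa [Units.smul_def] using inv_smul' _ (Units.mk0 t ht) hX

lemma tendsto_of_tendsto_dotProduct_mulVec {Z : ℕ → Matrix d d ℝ} {P : Matrix d d ℝ}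
    (hZ : ∀ k, (Z k).IsHermitian) (hP : P.IsHermitian)
    (h : ∀ x, Tendsto (fun k => x ⬝ᵥ Z k *ᵥ x) atTop (𝓝 (x ⬝ᵥ P *ᵥ x))) :
    Tendsto Z atTop (𝓝 P) := by
  refine tendsto_pi_nhds.2 fun a => tendsto_pi_nhds.2 fun b => ?_
  simp_rw [entry_eq_polarization (hZ _), entry_eq_polarization hP]
  exact (((h _).sub (h _)).sub (h _)).div_const 2

lemma exists_tendsto_of_monotone {Z : ℕ → Matrix d d ℝ} {U : Matrix d d ℝ}
    (hZ : ∀ k, (Z k).IsHermitian) (hmono : Monotone Z) (hU : ∀ k, Z k ≤ U) :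
    ∃ P, Tendsto Z atTop (𝓝 P) ∧ ∀ k, Z k ≤ P := by
  have hform (x : d → ℝ) : Monotone fun k => x ⬝ᵥ Z k *ᵥ x :=
    fun k m hkm => dotProduct_mulVec_mono (hmono hkm) x
  have hq (x : d → ℝ) : ∃ q, Tendsto (fun k => x ⬝ᵥ Z k *ᵥ x) atTop (𝓝 q) :=
    ⟨_, tendsto_atTop_ciSup (hform x)
      ⟨_, Set.forall_mem_range.2 fun k => dotProduct_mulVec_mono (hU k) x⟩⟩
  choose q hq using hq
  let P : Matrix d d ℝ := of fun a b =>
    (q (Pi.single a 1 + Pi.single b 1) - q (Pi.single a 1) - q (Pi.single b 1)) / 2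
  have hP : Tendsto Z atTop (𝓝 P) := by
    refine tendsto_pi_nhds.2 fun a => tendsto_pi_nhds.2 fun b => ?_
    simp_rw [entry_eq_polarization (hZ _)]
    exact (((hq _).sub (hq _)).sub (hq _)).div_const 2
  have hPform (x : d → ℝ) :
      Tendsto (fun k => x ⬝ᵥ Z k *ᵥ x) atTop (𝓝 (x ⬝ᵥ P *ᵥ x)) :=
    ((show Continuous fun M : Matrix d d ℝ => x ⬝ᵥ M *ᵥ x by fun_prop).tendsto P).comp hP
  have hPherm : P.IsHermitian := by
    ext a b
    simp only [conjTranspose_apply, star_trivial, P, of_apply,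
      add_comm (Pi.single b 1 : d → ℝ)]
    ring
  refine ⟨P, hP, fun k => le_iff.mpr <|
    PosSemidef.of_dotProduct_mulVec_nonneg (hPherm.sub (hZ k)) fun x => ?_⟩
  simpa [sub_mulVec] using (hform x).ge_of_tendsto (hPform x) k

lemma tendsto_of_inv_smul_le_of_le_smul {Y : ℕ → Matrix d d ℝ} {X : Matrix d d ℝ}
    {t : ℕ → ℝ} (hX : X.IsHermitian) (ht : Tendsto t atTop (𝓝 1))
    (hlow : ∀ k, (t k)⁻¹ • X ≤ Y k) (hup : ∀ k, Y k ≤ t k • X) :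
    Tendsto Y atTop (𝓝 X) := by
  have hY (k : ℕ) : (Y k).IsHermitian := by
    simpa using (hX.smul (IsSelfAdjoint.all (t k))).sub (le_iff.mp (hup k)).1
  refine tendsto_of_tendsto_dotProduct_mulVec hY hX fun x => ?_
  have hlow' := (ht.inv₀ one_ne_zero).mul_const (x ⬝ᵥ X *ᵥ x)
  have hup' := ht.mul_const (x ⬝ᵥ X *ᵥ x)
  simp only [inv_one, one_mul] at hlow' hup'
  refine tendsto_of_tendsto_of_tendsto_of_le_of_le hlow' hup' (fun k => ?_) (fun k => ?_)
  · simpa [smul_mulVec] using dotProduct_mulVec_mono (hlow k) x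
  · simpa [smul_mulVec] using dotProduct_mulVec_mono (hup k) x

lemma PosDef.smul_inv_le_inv_add {X Q : Matrix d d ℝ} {c : ℝ} (hX : X.PosDef)
    (hQ : Q.PosSemidef) (hc : 0 ≤ c) (hQX : Q ≤ c • X) : (1 + c)⁻¹ • X⁻¹ ≤ (X + Q)⁻¹ := by
  have hle : X + Q ≤ (1 + c) • X := by
    rw [add_smul, one_smul]
    exact add_le_add le_rfl hQX
  simpa [inv_smul_of_ne_zero (by positivity : (1 + c) ≠ 0) hX.isUnit_det] using
    (hX.add_posSemidef hQ).inv_anti hle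

lemma PosDef.transpose_mul_mul {X B : Matrix d d ℝ} (hX : X.PosDef) (hB : IsUnit B.det) :
    (Bᵀ * X * B).PosDef := by
  simpa [star_eq_conjTranspose] using
    (Matrix.IsUnit.posDef_star_left_conjugate_iff ((isUnit_iff_isUnit_det B).mpr hB)).mpr hX

lemma PosDef.mul_mul_transpose {X B : Matrix d d ℝ} (hX : X.PosDef) (hB : IsUnit B.det) :
    (B * X * Bᵀ).PosDef := by
  simpa using hX.transpose_mul_mul (isUnit_det_transpose B hB)

lemma mul_mul_transpose_inv (B X : Matrix d d ℝ) :
    (B * X * Bᵀ)⁻¹ = (B⁻¹)ᵀ * X⁻¹ * B⁻¹ := by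
  rw [Matrix.mul_inv_rev, Matrix.mul_inv_rev, transpose_nonsing_inv, Matrix.mul_assoc]

lemma PosDef.continuousAt_inv {X : Matrix d d ℝ} (hX : X.PosDef) : ContinuousAt Inv.inv X :=
  continuousAt_matrix_inv X <| by
    simpa [Ring.inverse_eq_inv'] using continuousAt_inv₀ hX.det_pos.ne'

lemma pow_mul_inv_pow_add {A : Matrix d d ℝ} (hA : IsUnit A.det) (j t : ℕ) :
    A ^ j * A⁻¹ ^ (j + t) = A⁻¹ ^ t := by
  rw [pow_add, ← Matrix.mul_assoc, inv_pow',
    mul_nonsing_inv _ (by simpa [det_pow] using hA.pow j), Matrix.one_mul]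

lemma posDef_sum_transpose_inv_pow_mul {A G : Matrix d d ℝ} (hA : IsUnit A.det) {r : ℕ}
    (hG : (∑ k ∈ Finset.range r, (A ^ k)ᵀ * G * A ^ k).PosDef) (m : ℕ) :
    (∑ s ∈ Finset.range r, (A⁻¹ ^ (m + s + 1))ᵀ * G * A⁻¹ ^ (m + s + 1)).PosDef := by
  have key : (A⁻¹ ^ (m + r))ᵀ * (∑ k ∈ Finset.range r, (A ^ k)ᵀ * G * A ^ k) * A⁻¹ ^ (m + r) =
      ∑ s ∈ Finset.range r, (A⁻¹ ^ (m + s + 1))ᵀ * G * A⁻¹ ^ (m + s + 1) := by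
    rw [Matrix.mul_sum, Matrix.sum_mul, ← Finset.sum_range_reflect]
    refine Finset.sum_congr rfl fun s hs => ?_
    have hs := Finset.mem_range.mp hs
    have e : A ^ (r - 1 - s) * A⁻¹ ^ (m + r) = A⁻¹ ^ (m + s + 1) := by
      rw [show m + r = r - 1 - s + (m + s + 1) by omega]
      exact pow_mul_inv_pow_add hA _ _
    rw [← e, transpose_mul]
    simp only [Matrix.mul_assoc]
  rw [← key]
  exact hG.transpose_mul_mul (by simpa [det_pow] using (isUnit_nonsing_inv_det A hA).pow (m + r))

lemma posDef_gramian_of_smul_le {A G G' : Matrix d d ℝ} {r : ℕ} {ε : ℝ} (hε : 0 < ε)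
    (hG : (∑ k ∈ Finset.range r, (A ^ k)ᵀ * G * A ^ k).PosDef) (hGG' : ε • G ≤ G') :
    (∑ k ∈ Finset.range r, (A ^ k)ᵀ * G' * A ^ k).PosDef :=
  (hG.smul hε).of_le <| by
    rw [Finset.smul_sum]
    exact Finset.sum_le_sum fun k _ => by
      simpa [Matrix.mul_smul, Matrix.smul_mul] using transpose_mul_mul_mono hGG' (A ^ k)

end Real

section Positive

variable {ι κ μ : Type*} [Fintype κ]

lemma mul_apply_pos {M : Matrix ι κ ℝ} {N : Matrix κ μ ℝ} (hM : ∀ i j, 0 < M i j)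
    (hN : ∀ i j, 0 ≤ N i j) (hNcol : ∀ j, ∃ i, 0 < N i j) (i : ι) (j : μ) :
    0 < (M * N) i j := by
  obtain ⟨q, hq⟩ := hNcol j
  exact Finset.sum_pos' (fun k _ => mul_nonneg (hM i k).le (hN k j))
    ⟨q, Finset.mem_univ q, mul_pos (hM i q) hq⟩

variable [Fintype ι]

lemma sum_smul_sum_smul {V : Type*} [AddCommMonoid V] [Module ℝ V] (A B : Matrix ι ι ℝ)
    (v : ι → V) (i : ι) : ∑ j, A i j • ∑ p, B j p • v p = ∑ p, (A * B) i p • v p := by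
  simp only [Finset.smul_sum, smul_smul, mul_apply, Finset.sum_smul]
  exact Finset.sum_comm

variable [DecidableEq ι] {M : Matrix ι ι ℝ}

lemma exists_pos_of_pow_pos (hM : ∀ i j, 0 ≤ M i j) {K : ℕ} (hK : 0 < K)
    (hpos : ∀ i j, 0 < (M ^ K) i j) : (∀ i, ∃ j, 0 < M i j) ∧ ∀ j, ∃ i, 0 < M i j := by
  obtain ⟨k, rfl⟩ := Nat.exists_eq_succ_of_ne_zero hK.ne'
  constructor
  · intro i
    by_contra! h0
    have := hpos i i
    simp [pow_succ', mul_apply, fun j => le_antisymm (h0 j) (hM i j)] at this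
  · intro j
    by_contra! h0
    have := hpos j j
    simp [pow_succ, mul_apply, fun i => le_antisymm (h0 i) (hM i j)] at this

lemma pow_apply_pos_of_le (hM : ∀ i j, 0 ≤ M i j) (hMcol : ∀ j, ∃ i, 0 < M i j) {K s : ℕ}
    (hK : ∀ i j, 0 < (M ^ K) i j) (hs : K ≤ s) (i j : ι) : 0 < (M ^ s) i j := by
  induction s, hs using Nat.le_induction generalizing i j with
  | base => exact hK i j
  | succ s _ ih => rw [pow_succ]; exact mul_apply_pos ih hM hMcol i j

end Positive

end Matrix

namespace CoupledRiccati

variable {ι d : Type*} [Fintype ι] [Fintype d] [DecidableEq d]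

noncomputable section

def infoMatrix (L ν : Matrix ι ι ℝ) (S P : ι → Matrix d d ℝ) (i : ι) : Matrix d d ℝ :=
  ∑ j, (L i j • (P j)⁻¹ + ν i j • S j)

def riccatiMap (A Q : Matrix d d ℝ) (L ν : Matrix ι ι ℝ) (S P : ι → Matrix d d ℝ) (i : ι) :
    Matrix d d ℝ :=
  A * (infoMatrix L ν S P i)⁻¹ * Aᵀ + Q

def riccatiIter (A Q : Matrix d d ℝ) (L ν : Matrix ι ι ℝ) (S : ι → Matrix d d ℝ) :
    ℕ → ι → Matrix d d ℝ
  | 0 => fun _ => Q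
  | k + 1 => riccatiMap A Q L ν S (riccatiIter A Q L ν S k)

end

structure Admissible (L ν : Matrix ι ι ℝ) (S : ι → Matrix d d ℝ) : Prop where
  L_nonneg : ∀ i j, 0 ≤ L i j
  exists_L_pos : ∀ i, ∃ j, 0 < L i j
  ν_nonneg : ∀ i j, 0 ≤ ν i j
  S_posSemidef : ∀ j, (S j).PosSemidef

variable {A Q : Matrix d d ℝ} {L ν : Matrix ι ι ℝ} {S P P' : ι → Matrix d d ℝ}

lemma infoMatrix_eq (i : ι) :
    infoMatrix L ν S P i = ∑ j, L i j • (P j)⁻¹ + ∑ j, ν i j • S j :=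
  Finset.sum_add_distrib

lemma infoMatrix_smul (hP : ∀ j, (P j).PosDef) {t : ℝ} (ht : t ≠ 0) (i : ι) :
    infoMatrix L ν S (t • P) i = t⁻¹ • ∑ j, L i j • (P j)⁻¹ + ∑ j, ν i j • S j := by
  simp only [infoMatrix_eq, Pi.smul_apply, inv_smul_of_ne_zero ht (hP _).isUnit_det,
    Finset.smul_sum, smul_comm t⁻¹]

namespace Admissible

lemma sum_smul_S_nonneg (h : Admissible L ν S) (i : ι) : 0 ≤ ∑ j, ν i j • S j :=
  Finset.sum_nonneg fun j _ => smul_nonneg (h.ν_nonneg i j) (h.S_posSemidef j).nonneg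

lemma infoMatrix_posDef (h : Admissible L ν S) (hP : ∀ j, (P j).PosDef) (i : ι) :
    (infoMatrix L ν S P i).PosDef := by
  obtain ⟨j, hj⟩ := h.exists_L_pos i
  refine ((hP j).inv.smul hj).of_le ?_
  rw [infoMatrix_eq]
  refine le_add_of_le_of_nonneg ?_ (h.sum_smul_S_nonneg i)
  exact Finset.single_le_sum
    (fun k _ => smul_nonneg (h.L_nonneg i k) (hP k).inv.posSemidef.nonneg) (Finset.mem_univ j)

lemma infoMatrix_anti (h : Admissible L ν S) (hP : ∀ j, (P j).PosDef)
    (hPP' : ∀ j, P j ≤ P' j) (i : ι) : infoMatrix L ν S P' i ≤ infoMatrix L ν S P i :=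
  Finset.sum_le_sum fun j _ => add_le_add_left
    (smul_le_smul_of_nonneg_left ((hP j).inv_anti (hPP' j)) (h.L_nonneg i j)) _

lemma le_riccatiMap (h : Admissible L ν S) (hP : ∀ j, (P j).PosDef) (i : ι) :
    Q ≤ riccatiMap A Q L ν S P i :=
  le_add_of_nonneg_left <| by
    simpa using mul_mul_transpose_mono (h.infoMatrix_posDef hP i).inv.posSemidef.nonneg A

lemma riccatiMap_mono (h : Admissible L ν S) (hP : ∀ j, (P j).PosDef)
    (hPP' : ∀ j, P j ≤ P' j) (i : ι) :
    riccatiMap A Q L ν S P i ≤ riccatiMap A Q L ν S P' i := by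
  have hP' j : (P' j).PosDef := (hP j).of_le (hPP' j)
  exact add_le_add_left (mul_mul_transpose_mono
    ((h.infoMatrix_posDef hP' i).inv_anti (h.infoMatrix_anti hP hPP' i)) A) Q

lemma tendsto_riccatiMap (h : Admissible L ν S) (hP : ∀ j, (P j).PosDef)
    {Y : ℕ → ι → Matrix d d ℝ} (hY : ∀ j, Tendsto (fun k => Y k j) atTop (𝓝 (P j))) (i : ι) :
    Tendsto (fun k => riccatiMap A Q L ν S (Y k) i) atTop (𝓝 (riccatiMap A Q L ν S P i)) := by
  have hinfo : Tendsto (fun k => infoMatrix L ν S (Y k) i) atTop (𝓝 (infoMatrix L ν S P i)) :=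
    tendsto_finsetSum _ fun j _ =>
      (((hP j).continuousAt_inv.tendsto.comp (hY j)).const_smul _).add tendsto_const_nhds
  exact ((show Continuous fun X : Matrix d d ℝ => A * X * Aᵀ + Q by fun_prop).tendsto _).comp
    ((h.infoMatrix_posDef hP i).continuousAt_inv.tendsto.comp hinfo)

lemma riccatiMap_smul_sub_le (h : Admissible L ν S) (hP : ∀ j, (P j).PosDef) {t : ℝ}
    (ht : 1 ≤ t) (i : ι) :
    riccatiMap A Q L ν S (t • P) i - Q ≤ t • (riccatiMap A Q L ν S P i - Q) := by
  have ht0 : 0 < t := zero_lt_one.trans_le ht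
  have hM := h.infoMatrix_posDef hP i
  have hle : t⁻¹ • infoMatrix L ν S P i ≤ infoMatrix L ν S (t • P) i := by
    rw [infoMatrix_smul hP ht0.ne', infoMatrix_eq, smul_add]
    exact add_le_add_right
      (smul_le_of_le_one_left (h.sum_smul_S_nonneg i) (inv_le_one_of_one_le₀ ht)) _
  have hinv := (hM.smul (inv_pos.mpr ht0)).inv_anti hle
  rw [inv_smul_of_ne_zero (inv_ne_zero ht0.ne') hM.isUnit_det, inv_inv] at hinv
  simpa [riccatiMap, Matrix.mul_smul, Matrix.smul_mul] using mul_mul_transpose_mono hinv A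

lemma smul_sub_le_riccatiMap_smul (h : Admissible L ν S) (hP : ∀ j, (P j).PosDef) {t : ℝ}
    (ht0 : 0 < t) (ht : t ≤ 1) (i : ι) :
    t • (riccatiMap A Q L ν S P i - Q) ≤ riccatiMap A Q L ν S (t • P) i - Q := by
  have hM := h.infoMatrix_posDef hP i
  have hle : infoMatrix L ν S (t • P) i ≤ t⁻¹ • infoMatrix L ν S P i := by
    rw [infoMatrix_smul hP ht0.ne', infoMatrix_eq, smul_add]
    exact add_le_add_right
      (le_smul_of_one_le_left (h.sum_smul_S_nonneg i) ((one_le_inv₀ ht0).mpr ht)) _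
  have hinv := (h.infoMatrix_posDef (P := t • P) (fun j => (hP j).smul ht0) i).inv_anti hle
  rw [inv_smul_of_ne_zero (inv_ne_zero ht0.ne') hM.isUnit_det, inv_inv] at hinv
  simpa [riccatiMap, Matrix.mul_smul, Matrix.smul_mul] using mul_mul_transpose_mono hinv A

variable {Pfix : ι → Matrix d d ℝ} {c t : ℝ}

lemma riccatiMap_le_smul_of_le_smul (h : Admissible L ν S) (hPfix : ∀ j, (Pfix j).PosDef)
    (hfix : Function.IsFixedPt (riccatiMap A Q L ν S) Pfix) (hcQ : ∀ j, (1 - c) • Pfix j ≤ Q)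
    (ht : 1 ≤ t) (hP : ∀ j, (P j).PosDef) (hPt : ∀ j, P j ≤ t • Pfix j) (i : ι) :
    riccatiMap A Q L ν S P i ≤ (1 + c * (t - 1)) • Pfix i := by
  have hsub := h.riccatiMap_smul_sub_le (A := A) (Q := Q) hPfix ht i
  rw [hfix.eq] at hsub
  have key : (1 + c * (t - 1)) • Pfix i - (t • (Pfix i - Q) + Q) =
      (t - 1) • (Q - (1 - c) • Pfix i) := by
    module
  calc riccatiMap A Q L ν S P i ≤ riccatiMap A Q L ν S (t • Pfix) i := h.riccatiMap_mono hP hPt i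
    _ ≤ t • (Pfix i - Q) + Q := sub_le_iff_le_add.mp hsub
    _ ≤ (1 + c * (t - 1)) • Pfix i :=
      sub_nonneg.mp (key ▸ smul_nonneg (by linarith) (sub_nonneg.mpr (hcQ i)))

lemma inv_smul_le_riccatiMap_of_inv_smul_le (h : Admissible L ν S)
    (hPfix : ∀ j, (Pfix j).PosDef) (hfix : Function.IsFixedPt (riccatiMap A Q L ν S) Pfix)
    (hc0 : 0 ≤ c) (hc1 : c ≤ 1) (hcQ : ∀ j, (1 - c) • Pfix j ≤ Q) (ht : 1 ≤ t)
    (hPt : ∀ j, t⁻¹ • Pfix j ≤ P j) (i : ι) :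
    (1 + c * (t - 1))⁻¹ • Pfix i ≤ riccatiMap A Q L ν S P i := by
  have ht0 : 0 < t := zero_lt_one.trans_le ht
  have hsub := h.smul_sub_le_riccatiMap_smul (A := A) (Q := Q) hPfix (inv_pos.mpr ht0)
    (inv_le_one_of_one_le₀ ht) i
  rw [hfix.eq] at hsub
  set μ := 1 + c * (t - 1)
  have hμ : 0 < μ := by nlinarith
  set s := t⁻¹ - μ⁻¹ + (1 - t⁻¹) * (1 - c)
  have hs : 0 ≤ s := by
    have : s = (t - 1) ^ 2 * c * (1 - c) / (t * μ) := by
      have hμ0 : 1 + c * (t - 1) ≠ 0 := hμ.ne'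
      simp only [s, μ]
      field_simp
      ring
    rw [this]
    exact div_nonneg (mul_nonneg (mul_nonneg (sq_nonneg _) hc0) (by linarith)) (by positivity)
  have key : t⁻¹ • (Pfix i - Q) + Q - μ⁻¹ • Pfix i =
      (1 - t⁻¹) • (Q - (1 - c) • Pfix i) + s • Pfix i := by
    module
  calc μ⁻¹ • Pfix i ≤ t⁻¹ • (Pfix i - Q) + Q :=
        sub_nonneg.mp (key ▸ add_nonneg (smul_nonneg (by simp [inv_le_one_of_one_le₀ ht])
          (sub_nonneg.mpr (hcQ i))) (smul_nonneg hs (hPfix i).posSemidef.nonneg))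
    _ ≤ riccatiMap A Q L ν S (t⁻¹ • Pfix) i := le_sub_iff_add_le.mp hsub
    _ ≤ riccatiMap A Q L ν S P i :=
        h.riccatiMap_mono (fun j => (hPfix j).smul (inv_pos.mpr ht0)) hPt i

lemma sandwich_iterate (h : Admissible L ν S) (hPfix : ∀ j, (Pfix j).PosDef)
    (hfix : Function.IsFixedPt (riccatiMap A Q L ν S) Pfix) (hc0 : 0 ≤ c) (hc1 : c ≤ 1)
    (hcQ : ∀ j, (1 - c) • Pfix j ≤ Q) {Y : ℕ → ι → Matrix d d ℝ}
    (hY : ∀ k j, Y (k + 1) j = riccatiMap A Q L ν S (Y k) j) (ht : 1 ≤ t)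
    (hY0 : ∀ j, t⁻¹ • Pfix j ≤ Y 0 j ∧ Y 0 j ≤ t • Pfix j) (k : ℕ) :
    ∀ j, (1 + c ^ k * (t - 1))⁻¹ • Pfix j ≤ Y k j ∧ Y k j ≤ (1 + c ^ k * (t - 1)) • Pfix j := by
  induction k with
  | zero => simpa using hY0
  | succ k ih =>
    have htk : 1 ≤ 1 + c ^ k * (t - 1) :=
      le_add_of_nonneg_right (mul_nonneg (pow_nonneg hc0 k) (by linarith))
    have hYk j : (Y k j).PosDef := ((hPfix j).smul (by positivity)).of_le (ih j).1
    have e : 1 + c ^ (k + 1) * (t - 1) = 1 + c * (1 + c ^ k * (t - 1) - 1) := by ring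
    intro j
    rw [hY, e]
    exact ⟨h.inv_smul_le_riccatiMap_of_inv_smul_le hPfix hfix hc0 hc1 hcQ htk (fun j => (ih j).1) j,
      h.riccatiMap_le_smul_of_le_smul hPfix hfix hcQ htk hYk (fun j => (ih j).2) j⟩

theorem tendsto_of_isFixedPt (hQ : Q.PosDef) (h : Admissible L ν S)
    (hPfix : ∀ j, (Pfix j).PosDef) (hfix : Function.IsFixedPt (riccatiMap A Q L ν S) Pfix)
    {Y : ℕ → ι → Matrix d d ℝ} (hY0 : ∀ j, (Y 0 j).PosDef)
    (hY : ∀ k j, Y (k + 1) j = riccatiMap A Q L ν S (Y k) j) (i : ι) :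
    Tendsto (fun k => Y k i) atTop (𝓝 (Pfix i)) := by
  obtain ⟨ρ, hρ, hPfixQ⟩ := exists_forall_le_smul (fun j => (hPfix j).1) fun _ => hQ
  have hρ0 : 0 < ρ := zero_lt_one.trans_le hρ
  have hc0 : 0 ≤ 1 - ρ⁻¹ := sub_nonneg.mpr (inv_le_one_of_one_le₀ hρ)
  have hc1 : 1 - ρ⁻¹ < 1 := sub_lt_self 1 (inv_pos.mpr hρ0)
  have hcQ j : (1 - (1 - ρ⁻¹)) • Pfix j ≤ Q := by
    simpa using inv_smul_le_of_le_smul hρ0 (hPfixQ j)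
  obtain ⟨t₁, ht₁, hup⟩ := exists_forall_le_smul (fun j => (hY0 j).1) hPfix
  obtain ⟨t₂, -, hlow⟩ := exists_forall_le_smul (fun j => (hPfix j).1) hY0
  have hY0' j : (max t₁ t₂)⁻¹ • Pfix j ≤ Y 0 j ∧ Y 0 j ≤ max t₁ t₂ • Pfix j :=
    ⟨inv_smul_le_of_le_smul (by positivity) ((hlow j).trans
        (smul_le_smul_of_nonneg_right (le_max_right _ _) (hY0 j).posSemidef.nonneg)),
      (hup j).trans (smul_le_smul_of_nonneg_right (le_max_left _ _) (hPfix j).posSemidef.nonneg)⟩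
  have hsand := h.sandwich_iterate hPfix hfix hc0 hc1.le hcQ hY (ht₁.trans (le_max_left _ _)) hY0'
  have hlim : Tendsto (fun k => 1 + (1 - ρ⁻¹) ^ k * (max t₁ t₂ - 1)) atTop (𝓝 1) := by
    simpa using ((tendsto_pow_atTop_nhds_zero_of_lt_one hc0 hc1).mul_const _).const_add 1
  exact tendsto_of_inv_smul_le_of_le_smul (hPfix i).1 hlim (fun k => (hsand k i).1)
    fun k => (hsand k i).2

lemma le_riccatiIter (hQ : Q.PosDef) (h : Admissible L ν S) :
    ∀ k j, Q ≤ riccatiIter A Q L ν S k j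
  | 0, _ => le_rfl
  | k + 1, j => h.le_riccatiMap (fun j => hQ.of_le (h.le_riccatiIter hQ k j)) j

lemma riccatiIter_posDef (hQ : Q.PosDef) (h : Admissible L ν S) (k : ℕ) (j : ι) :
    (riccatiIter A Q L ν S k j).PosDef :=
  hQ.of_le (h.le_riccatiIter hQ k j)

lemma monotone_riccatiIter (hQ : Q.PosDef) (h : Admissible L ν S) (j : ι) :
    Monotone fun k => riccatiIter A Q L ν S k j := by
  have step : ∀ k j, riccatiIter A Q L ν S k j ≤ riccatiIter A Q L ν S (k + 1) j := by
    intro k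
    induction k with
    | zero => exact h.le_riccatiMap fun _ => hQ
    | succ k ih => exact h.riccatiMap_mono (h.riccatiIter_posDef hQ k) ih
  exact monotone_nat_of_le_succ fun k => step k j

lemma exists_smul_le_inv_riccatiMap (hA : IsUnit A.det) (hQ : Q.PosDef)
    (h : Admissible L ν S) :
    ∃ γ : ℝ, 0 < γ ∧ ∀ P : ι → Matrix d d ℝ, (∀ j, Q ≤ P j) → ∀ i,
      γ • ((A⁻¹)ᵀ * infoMatrix L ν S P i * A⁻¹) ≤ (riccatiMap A Q L ν S P i)⁻¹ := by
  have hMQ := h.infoMatrix_posDef (P := fun _ => Q) fun _ => hQ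
  obtain ⟨c, hc, hQc⟩ :=
    exists_forall_le_smul (fun _ => hQ.1) fun i => (hMQ i).inv.mul_mul_transpose hA
  refine ⟨(1 + c)⁻¹, by positivity, fun P hP i => ?_⟩
  have hM := h.infoMatrix_posDef (fun j => hQ.of_le (hP j)) i
  have hQle : Q ≤ c • (A * (infoMatrix L ν S P i)⁻¹ * Aᵀ) :=
    (hQc i).trans (smul_le_smul_of_nonneg_left (mul_mul_transpose_mono
      (hM.inv_anti (h.infoMatrix_anti (fun _ => hQ) hP i)) A) (by positivity))
  simpa [riccatiMap, mul_mul_transpose_inv, nonsing_inv_nonsing_inv _ hM.isUnit_det] using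
    (hM.inv.mul_mul_transpose hA).smul_inv_le_inv_add hQ.posSemidef (by positivity) hQle

variable [DecidableEq ι]

lemma smul_conj_le_inv_riccatiIter (hQ : Q.PosDef) (h : Admissible L ν S) {γ : ℝ}
    (hγ0 : 0 ≤ γ) (hγ : ∀ P : ι → Matrix d d ℝ, (∀ j, Q ≤ P j) → ∀ i,
      γ • ((A⁻¹)ᵀ * infoMatrix L ν S P i * A⁻¹) ≤ (riccatiMap A Q L ν S P i)⁻¹)
    (s k : ℕ) (i : ι) :
    γ ^ (s + 1) • ((A⁻¹ ^ (s + 1))ᵀ * (∑ p, (L ^ s * ν) i p • S p) * A⁻¹ ^ (s + 1)) ≤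
      (riccatiIter A Q L ν S (k + s + 1) i)⁻¹ := by
  induction s generalizing i with
  | zero =>
    refine le_trans ?_ (hγ _ (h.le_riccatiIter hQ k) i)
    rw [infoMatrix_eq]
    simpa using smul_le_smul_of_nonneg_left (transpose_mul_mul_mono (le_add_of_nonneg_left
      (Finset.sum_nonneg fun j _ => smul_nonneg (h.L_nonneg i j)
        (h.riccatiIter_posDef hQ k j).inv.posSemidef.nonneg)) A⁻¹) hγ0
  | succ s ih =>
    refine le_trans ?_ (hγ _ (h.le_riccatiIter hQ (k + s + 1)) i)
    have e : γ ^ (s + 1 + 1) • ((A⁻¹ ^ (s + 1 + 1))ᵀ * (∑ p, (L ^ (s + 1) * ν) i p • S p) *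
        A⁻¹ ^ (s + 1 + 1)) = γ • ((A⁻¹)ᵀ * (∑ j, L i j • (γ ^ (s + 1) •
          ((A⁻¹ ^ (s + 1))ᵀ * (∑ p, (L ^ s * ν) j p • S p) * A⁻¹ ^ (s + 1)))) * A⁻¹) := by
      have e1 : ∑ j, L i j • (γ ^ (s + 1) •
          ((A⁻¹ ^ (s + 1))ᵀ * (∑ p, (L ^ s * ν) j p • S p) * A⁻¹ ^ (s + 1))) =
          γ ^ (s + 1) • ((A⁻¹ ^ (s + 1))ᵀ *
            (∑ j, L i j • ∑ p, (L ^ s * ν) j p • S p) * A⁻¹ ^ (s + 1)) := by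
        simp only [Matrix.mul_sum, Matrix.sum_mul, Matrix.mul_smul, Matrix.smul_mul,
          Finset.smul_sum, smul_comm (L i _) (γ ^ (s + 1))]
      rw [e1, sum_smul_sum_smul, ← Matrix.mul_assoc, ← pow_succ', Matrix.mul_smul,
        Matrix.smul_mul, smul_smul, ← pow_succ', pow_succ A⁻¹ (s + 1), transpose_mul]
      simp only [Matrix.mul_assoc]
    rw [e, infoMatrix_eq]
    refine smul_le_smul_of_nonneg_left (transpose_mul_mul_mono ?_ _) hγ0
    exact le_add_of_le_of_nonneg (Finset.sum_le_sum fun j _ =>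
      smul_le_smul_of_nonneg_left (ih j) (h.L_nonneg i j)) (h.sum_smul_S_nonneg i)

lemma exists_smul_one_le_inv_riccatiIter (hA : IsUnit A.det) (hQ : Q.PosDef)
    (h : Admissible L ν S) {K r : ℕ} (hpos : ∀ s, K ≤ s → ∀ i p, 0 < (L ^ s * ν) i p)
    (hObs : (∑ k ∈ Finset.range r, (A ^ k)ᵀ * (∑ p, S p) * A ^ k).PosDef) (i : ι) :
    ∃ ε : ℝ, 0 < ε ∧ ∀ k, ε • 1 ≤ (riccatiIter A Q L ν S (k + K + r) i)⁻¹ := by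
  obtain ⟨γ, hγ0, hγ⟩ := h.exists_smul_le_inv_riccatiMap hA hQ
  obtain ⟨δ, hδ, hδle⟩ := exists_pos_forall_le (f := fun sp : Fin r × ι =>
    γ ^ (K + sp.1 + 1) * (L ^ (K + sp.1) * ν) i sp.2)
    fun sp => mul_pos (pow_pos hγ0 _) (hpos _ (Nat.le_add_right _ _) i sp.2)
  obtain ⟨e, he, heE⟩ := (posDef_sum_transpose_inv_pow_mul hA hObs K).exists_smul_one_le
  -- Dividing by `r + 1` rather than `r` avoids a case split on `r = 0`.
  refine ⟨δ * e / (r + 1), by positivity, fun k => ?_⟩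
  set Z := riccatiIter A Q L ν S (k + K + r) i
  have hterm : ∀ s ∈ Finset.range r,
      δ • ((A⁻¹ ^ (K + s + 1))ᵀ * (∑ p, S p) * A⁻¹ ^ (K + s + 1)) ≤ Z⁻¹ := by
    intro s hs
    have hs := Finset.mem_range.mp hs
    have hle := h.smul_conj_le_inv_riccatiIter hQ hγ0.le hγ (K + s) (k + r - s - 1) i
    rw [show k + r - s - 1 + (K + s) + 1 = k + K + r by omega] at hle
    refine le_trans ?_ hle
    simp only [Finset.smul_sum, Matrix.mul_sum, Matrix.sum_mul, Matrix.mul_smul,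
      Matrix.smul_mul, smul_smul]
    exact Finset.sum_le_sum fun p _ => smul_le_smul_of_nonneg_right (hδle ⟨⟨s, hs⟩, p⟩)
      (by simpa using transpose_mul_mul_mono (h.S_posSemidef p).nonneg (A⁻¹ ^ (K + s + 1)))
  have hsum := Finset.sum_le_card_nsmul _ _ _ hterm
  rw [Finset.card_range, ← Finset.smul_sum, ← Nat.cast_smul_eq_nsmul ℝ] at hsum
  calc (δ * e / (r + 1)) • (1 : Matrix d d ℝ) = (r + 1 : ℝ)⁻¹ • δ • e • 1 := by
        rw [smul_smul, smul_smul]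
        ring_nf
    _ ≤ (r + 1 : ℝ)⁻¹ • (r + 1 : ℝ) • Z⁻¹ := by
        refine smul_le_smul_of_nonneg_left ?_ (by positivity)
        refine (smul_le_smul_of_nonneg_left heE hδ.le).trans (hsum.trans ?_)
        exact smul_le_smul_of_nonneg_right (by linarith)
          (h.riccatiIter_posDef hQ _ i).inv.posSemidef.nonneg
    _ = Z⁻¹ := by rw [smul_smul, inv_mul_cancel₀ (by positivity), one_smul]

lemma exists_riccatiIter_le_smul_one (hA : IsUnit A.det) (hQ : Q.PosDef)
    (h : Admissible L ν S) {K r : ℕ} (hpos : ∀ s, K ≤ s → ∀ i p, 0 < (L ^ s * ν) i p)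
    (hObs : (∑ k ∈ Finset.range r, (A ^ k)ᵀ * (∑ p, S p) * A ^ k).PosDef) (i : ι) :
    ∃ b : ℝ, ∀ k, riccatiIter A Q L ν S k i ≤ b • 1 := by
  obtain ⟨ε, hε, hinfo⟩ := h.exists_smul_one_le_inv_riccatiIter hA hQ hpos hObs i
  refine ⟨ε⁻¹, fun k => ?_⟩
  have hZ := h.riccatiIter_posDef (A := A) hQ (k + K + r) i
  have hbound := (PosDef.one.smul hε).inv_anti (hinfo k)
  rw [inv_smul_of_ne_zero hε.ne' (by simp), inv_one,
    nonsing_inv_nonsing_inv _ hZ.isUnit_det] at hbound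
  exact (h.monotone_riccatiIter hQ i (by omega : k ≤ k + K + r)).trans hbound

theorem exists_isFixedPt (hA : IsUnit A.det) (hQ : Q.PosDef) (h : Admissible L ν S)
    {K r : ℕ} (hpos : ∀ s, K ≤ s → ∀ i p, 0 < (L ^ s * ν) i p)
    (hObs : (∑ k ∈ Finset.range r, (A ^ k)ᵀ * (∑ p, S p) * A ^ k).PosDef) :
    ∃ P : ι → Matrix d d ℝ, (∀ i, (P i).PosDef) ∧ Function.IsFixedPt (riccatiMap A Q L ν S) P := by
  have hlim (i : ι) : ∃ P, Tendsto (fun k => riccatiIter A Q L ν S k i) atTop (𝓝 P) ∧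
      ∀ k, riccatiIter A Q L ν S k i ≤ P := by
    obtain ⟨b, hb⟩ := h.exists_riccatiIter_le_smul_one hA hQ hpos hObs i
    exact exists_tendsto_of_monotone (fun k => (h.riccatiIter_posDef hQ k i).1)
      (h.monotone_riccatiIter hQ i) hb
  choose P hP hle using hlim
  have hPpd (i : ι) : (P i).PosDef := hQ.of_le (hle i 0)
  exact ⟨P, hPpd, funext fun i => tendsto_nhds_unique (h.tendsto_riccatiMap hPpd hP i)
    ((hP i).comp (tendsto_add_atTop_nat 1))⟩

end Admissible

end CoupledRiccati

open CoupledRiccati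

theorem modified_hcre_unique_solution_and_convergence_general
    (n N : ℕ)
    (m : Fin N → ℕ)
    (A : Matrix (Fin n) (Fin n) ℝ) (hA : IsUnit A.det)
    (C : ∀ i : Fin N, Matrix (Fin (m i)) (Fin n) ℝ)
    (hObs : (∑ k ∈ Finset.range n, (A ^ k)ᵀ * (∑ i, (C i)ᵀ * C i) * A ^ k).PosDef)
    (Q : Matrix (Fin n) (Fin n) ℝ) (hQ : Q.PosDef)
    (R : ∀ i : Fin N, Matrix (Fin (m i)) (Fin (m i)) ℝ) (hR : ∀ i, (R i).PosDef)
    (L : Matrix (Fin N) (Fin N) ℝ)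
    (hLnonneg : ∀ i j, 0 ≤ L i j)
    (hLprim : ∃ k : ℕ, 0 < k ∧ ∀ i j, 0 < (L ^ k) i j)
    (ν : Matrix (Fin N) (Fin N) ℝ)
    (hνnonneg : ∀ i j, 0 ≤ ν i j)
    (hνprim : ∃ k : ℕ, 0 < k ∧ ∀ i j, 0 < (ν ^ k) i j) :
    ∃ P : Fin N → Matrix (Fin n) (Fin n) ℝ,
      (∀ i, (P i).PosDef) ∧
      (∀ i, P i =
        A * (∑ j, (L i j • (P j)⁻¹ + ν i j • ((C j)ᵀ * (R j)⁻¹ * C j)))⁻¹ * Aᵀ + Q) ∧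
      (∀ P' : Fin N → Matrix (Fin n) (Fin n) ℝ,
        (∀ i, (P' i).PosDef) →
        (∀ i, P' i =
          A * (∑ j, (L i j • (P' j)⁻¹ + ν i j • ((C j)ᵀ * (R j)⁻¹ * C j)))⁻¹ * Aᵀ + Q) →
        P' = P) ∧
      (∀ (P0 : Fin N → Matrix (Fin n) (Fin n) ℝ), (∀ i, (P0 i).PosDef) →
        ∀ (Pseq : ℕ → Fin N → Matrix (Fin n) (Fin n) ℝ),
          Pseq 0 = P0 →
          (∀ k i, Pseq (k + 1) i =
            A * (∑ j, (L i j • (Pseq k j)⁻¹ + ν i j • ((C j)ᵀ * (R j)⁻¹ * C j)))⁻¹ * Aᵀ + Q) →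
          ∀ i : Fin N, Tendsto (fun k => Pseq k i) atTop (nhds (P i))) := by
  obtain ⟨K, hK, hLK⟩ := hLprim
  obtain ⟨Kν, hKν, hνK⟩ := hνprim
  obtain ⟨hLrow, hLcol⟩ := exists_pos_of_pow_pos hLnonneg hK hLK
  have h : Admissible L ν fun j => (C j)ᵀ * (R j)⁻¹ * C j := ⟨hLnonneg, hLrow, hνnonneg,
    fun j => by simpa using (hR j).inv.posSemidef.conjTranspose_mul_mul_same (C j)⟩
  have hpos (s : ℕ) (hs : K ≤ s) := mul_apply_pos (pow_apply_pos_of_le hLnonneg hLcol hLK hs)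
    hνnonneg (exists_pos_of_pow_pos hνnonneg hKν hνK).2
  obtain ⟨ε, hε, hεle⟩ := exists_smul_sum_le_sum_transpose_mul_inv_mul C hR
  obtain ⟨P, hPpd, hfix⟩ := h.exists_isFixedPt hA hQ hpos (posDef_gramian_of_smul_le hε hObs hεle)
  have hconv (Y : ℕ → Fin N → Matrix (Fin n) (Fin n) ℝ) (hY0 : ∀ j, (Y 0 j).PosDef)
      (hY : ∀ k j, Y (k + 1) j = riccatiMap A Q L ν _ (Y k) j) :=
    h.tendsto_of_isFixedPt hQ hPpd hfix hY0 hY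
  refine ⟨P, hPpd, fun i => (congrFun hfix i).symm, fun P' hP' hfix' => funext fun i => ?_,
    fun P0 hP0 Y hY0 hY => hconv Y (hY0 ▸ hP0) hY⟩
  exact tendsto_nhds_unique tendsto_const_nhds (hconv (fun _ => P') hP' (fun _ => hfix') i)

/-- For a primitive nonnegative matrix `ν`, the modified HCREs
`P_i = A (∑_j l_{ij} P_j⁻¹ + ν_{ij} C_jᵀ R_j⁻¹ C_j)⁻¹ Aᵀ + Q` have a unique group of
positive definite solutions, and the iterates of the modified iterative law converge
entrywise to these solutions from any positive definite initial matrices. -/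
theorem modified_hcre_unique_solution_and_convergence
    (n N : ℕ) (hn : 0 < n) (hN : 0 < N)
    (m : Fin N → ℕ) (hm : ∀ i, 0 < m i)
    (A : Matrix (Fin n) (Fin n) ℝ) (hA : IsUnit A.det)
    (C : ∀ i : Fin N, Matrix (Fin (m i)) (Fin n) ℝ)
    (hObs : (∑ k ∈ Finset.range n, (A ^ k)ᵀ * (∑ i, (C i)ᵀ * C i) * A ^ k).PosDef)
    (Q : Matrix (Fin n) (Fin n) ℝ) (hQ : Q.PosDef)
    (R : ∀ i : Fin N, Matrix (Fin (m i)) (Fin (m i)) ℝ) (hR : ∀ i, (R i).PosDef)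
    (L : Matrix (Fin N) (Fin N) ℝ)
    (hLnonneg : ∀ i j, 0 ≤ L i j) (hLrow : ∀ i, ∑ j, L i j = 1)
    (hLprim : ∃ k : ℕ, 0 < k ∧ ∀ i j, 0 < (L ^ k) i j)
    (ν : Matrix (Fin N) (Fin N) ℝ)
    (hνnonneg : ∀ i j, 0 ≤ ν i j)
    (hνprim : ∃ k : ℕ, 0 < k ∧ ∀ i j, 0 < (ν ^ k) i j) :
    ∃ P : Fin N → Matrix (Fin n) (Fin n) ℝ,
      (∀ i, (P i).PosDef) ∧
      (∀ i, P i =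
        A * (∑ j, (L i j • (P j)⁻¹ + ν i j • ((C j)ᵀ * (R j)⁻¹ * C j)))⁻¹ * Aᵀ + Q) ∧
      (∀ P' : Fin N → Matrix (Fin n) (Fin n) ℝ,
        (∀ i, (P' i).PosDef) →
        (∀ i, P' i =
          A * (∑ j, (L i j • (P' j)⁻¹ + ν i j • ((C j)ᵀ * (R j)⁻¹ * C j)))⁻¹ * Aᵀ + Q) →
        P' = P) ∧
      (∀ (P0 : Fin N → Matrix (Fin n) (Fin n) ℝ), (∀ i, (P0 i).PosDef) →
        ∀ (Pseq : ℕ → Fin N → Matrix (Fin n) (Fin n) ℝ),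
          Pseq 0 = P0 →
          (∀ k i, Pseq (k + 1) i =
            A * (∑ j, (L i j • (Pseq k j)⁻¹ + ν i j • ((C j)ᵀ * (R j)⁻¹ * C j)))⁻¹ * Aᵀ + Q) →
          ∀ i : Fin N, Tendsto (fun k => Pseq k i) atTop (nhds (P i))) :=
  modified_hcre_unique_solution_and_convergence_general n N m A hA C hObs Q hQ R hR L hLnonneg
    hLprim ν hνnonneg hνprim
end
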